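/- arXiv:2108.00893 — 15 statements merged into one kernel-verified Lean document; each statement's English description precedes it below -/
import Mathlib

section
/- Let n ≥ 1 and let c : {0,1,…,n}² → ℝ be a closed difference bound matrix, i.e. c_{i,i} = 0 for all i and c_{i,k} ≤ c_{i,j} + c_{j,k} for all i,j,k ∈ {0,…,n}. Then the zone H_ext = {x ∈ ℝⁿ : x_i − x_j ≤ c_{i,j} for all i,j ∈ {0,…,n}, where x_0 := 0} is equal to the tropical convex hull of the n+1 points A = (−c_{0,1}, …, −c_{0,n}) and B_k = (c_{k,0} − c_{k,1}, …, c_{k,0} − c_{k,n}) for k = 1, …, n. -/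
def tconv {d i : Type*} [Fintype i] (v : i → d → ℝ) : Set (d → ℝ) :=
  { x | ∃ lam : i → ℝ, (∀ k, lam k ≤ 0) ∧ (∃ k, lam k = 0) ∧
      ∀ t, IsGreatest (Set.range fun k => lam k + v k t) (x t) }

/-- A closed DBM zone equals the tropical convex hull of the points `A`, `B_1, …, B_n`. -/
theorem zone_eq_tropicalHull (n : ℕ) (hn : 1 ≤ n) (c : Fin (n + 1) → Fin (n + 1) → ℝ)
    (hdiag : ∀ i, c i i = 0)
    (hclosed : ∀ i j k, c i k ≤ c i j + c j k) :
    {x : Fin n → ℝ | ∀ i j, (Fin.cons 0 x : Fin (n + 1) → ℝ) i - (Fin.cons 0 x : Fin (n + 1) → ℝ) j ≤ c i j}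
      = tconv ((Fin.cons (fun i : Fin n => -c 0 i.succ)
          (fun k : Fin n => fun i : Fin n => c k.succ 0 - c k.succ i.succ) : Fin (n + 1) → Fin n → ℝ)) := by
  set v : Fin (n + 1) → Fin n → ℝ :=
    (Fin.cons (fun i : Fin n => -c 0 i.succ)
      (fun k : Fin n => fun i : Fin n => c k.succ 0 - c k.succ i.succ)) with hvdef
  have hvk : ∀ (k : Fin (n + 1)) (t : Fin n), v k t = c k 0 - c k t.succ := by
    intro k t
    refine Fin.cases ?_ ?_ k
    · simp [hvdef, hdiag]
    · intro m; simp [hvdef]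
  ext x
  simp only [Set.mem_setOf_eq, tconv]
  constructor
  · intro hx
    refine ⟨fun k => (Fin.cons (0 : ℝ) x : Fin (n + 1) → ℝ) k - c k 0, ?_, ⟨0, by simp [hdiag]⟩, ?_⟩
    · intro k
      have := hx k 0
      simpa using this
    · intro t
      constructor
      · refine ⟨t.succ, ?_⟩
        simp [hvk, hdiag]
      · rintro y ⟨k, rfl⟩
        have := hx k t.succ
        simp only [Fin.cons_succ] at this
        simp only [hvk]
        linarith
  · rintro ⟨lam, hle, ⟨k0, hk0⟩, hgr⟩
    intro i j
    refine Fin.cases ?_ ?_ i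
    · refine Fin.cases ?_ ?_ j
      · simp [hdiag]
      · intro t
        have h1 : lam k0 + v k0 t ≤ x t := (hgr t).2 ⟨k0, rfl⟩
        have h2 := hclosed k0 0 t.succ
        rw [hvk] at h1
        simp only [Fin.cons_zero, Fin.cons_succ]
        linarith
    · intro s
      obtain ⟨k, hk⟩ := (hgr s).1
      simp only [hvk] at hk
      refine Fin.cases ?_ ?_ j
      · have h2 := hclosed k s.succ 0
        have hlk := hle k
        simp only [Fin.cons_zero, Fin.cons_succ]
        linarith
      · intro t
        have h1 : lam k + v k t ≤ x t := (hgr t).2 ⟨k, rfl⟩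
        have h2 := hclosed k s.succ t.succ
        rw [hvk] at h1
        simp only [Fin.cons_succ]
        linarith
end

section
/- Every point of S = {(x, f(x)) : x ∈ K} lies in the zone Z_f; that is, for every x ∈ K and y = f(x): x̲_j ≤ x_j ≤ x̄_j for all j; m_i ≤ y_i ≤ M_i for all i; y_{i₁} − y_{i₂} ≤ Δ_{i₁,i₂} for all i₁,i₂; and m_i − x̄_j + δ_{i,j} ≤ y_i − x_j ≤ M_i − x̲_j − δ_{i,j} for all i,j. -/
/-!
Each of the four families of inequalities bounds an affine form in `x` over the box `K`, and the
bound is the one of interval arithmetic: `Σ c_j x_j` is minimised (maximised) over the box by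
taking each `x_j` at the end of `[x̲_j, x̄_j]` selected by the sign of `c_j`. For `m_i`, `M_i`
the form is `y_i`, for `Δ_{i₁,i₂}` it is `y_{i₁} - y_{i₂}`, and for the mixed constraints it is
`y_i - x_j`, whose coefficient of `x_j` is `w_{i,j} - 1`: the correction `δ_{i,j}` is exactly
what turns the corner of `w_{i,j}` into the corner of `w_{i,j} - 1`.
-/

open Finset

noncomputable def lowerCorner (c l u : ℝ) : ℝ := if c < 0 then u else l

noncomputable def upperCorner (c l u : ℝ) : ℝ := if c < 0 then l else u

/-- The paper's `δ_{i,j}`, as a function of `c = w_{i,j}` and `[l, u] = [x̲_j, x̄_j]`. -/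
noncomputable def zoneDelta (c l u : ℝ) : ℝ :=
  if c ≤ 0 then 0 else if c ≤ 1 then c * (u - l) else u - l

section Corners

variable {c l u x : ℝ}

theorem mul_lowerCorner_le (hl : l ≤ x) (hu : x ≤ u) : c * lowerCorner c l u ≤ c * x := by
  unfold lowerCorner
  split_ifs with hc
  · exact mul_le_mul_of_nonpos_left hu hc.le
  · exact mul_le_mul_of_nonneg_left hl (not_lt.1 hc)

theorem mul_le_mul_upperCorner (hl : l ≤ x) (hu : x ≤ u) : c * x ≤ c * upperCorner c l u := by
  unfold upperCorner
  split_ifs with hc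
  · exact mul_le_mul_of_nonpos_left hl hc.le
  · exact mul_le_mul_of_nonneg_left hu (not_lt.1 hc)

theorem mul_lowerCorner_sub_add_zoneDelta :
    c * lowerCorner c l u - u + zoneDelta c l u = (c - 1) * lowerCorner (c - 1) l u := by
  unfold lowerCorner zoneDelta
  rcases lt_or_ge c 0 with hc | hc
  · simp only [hc, hc.le, show c - 1 < 0 by linarith, if_true]
    ring
  obtain rfl | hc := hc.eq_or_lt
  · norm_num
  obtain hc' | hc' := lt_or_ge c 1
  · simp only [hc.not_gt, hc.not_ge, hc'.le, sub_neg.2 hc', if_true, if_false]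
    ring
  obtain rfl | hc' := hc'.eq_or_lt
  · norm_num
  · simp only [hc.not_gt, hc.not_ge, hc'.not_ge, (sub_pos.2 hc').not_gt, if_false]
    ring

theorem mul_upperCorner_sub_sub_zoneDelta :
    c * upperCorner c l u - l - zoneDelta c l u = (c - 1) * upperCorner (c - 1) l u := by
  unfold upperCorner zoneDelta
  rcases lt_or_ge c 0 with hc | hc
  · simp only [hc, hc.le, show c - 1 < 0 by linarith, if_true]
    ring
  obtain rfl | hc := hc.eq_or_lt
  · norm_num
  obtain hc' | hc' := lt_or_ge c 1
  · simp only [hc.not_gt, hc.not_ge, hc'.le, sub_neg.2 hc', if_true, if_false]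
    ring
  obtain rfl | hc' := hc'.eq_or_lt
  · norm_num
  · simp only [hc.not_gt, hc.not_ge, hc'.not_ge, (sub_pos.2 hc').not_gt, if_false]
    ring

theorem mul_lowerCorner_sub_add_zoneDelta_le (hl : l ≤ x) (hu : x ≤ u) :
    c * lowerCorner c l u + (-u + zoneDelta c l u) ≤ c * x + -x := by
  have h := mul_lowerCorner_le (c := c - 1) hl hu
  rw [← mul_lowerCorner_sub_add_zoneDelta] at h
  linarith

theorem le_mul_upperCorner_sub_sub_zoneDelta (hl : l ≤ x) (hu : x ≤ u) :
    c * x + -x ≤ c * upperCorner c l u + (-l - zoneDelta c l u) := by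
  have h := mul_le_mul_upperCorner (c := c - 1) hl hu
  rw [← mul_upperCorner_sub_sub_zoneDelta] at h
  linarith

end Corners

theorem Finset.sum_add_le_sum_add_of_le_of_ne {ι M : Type*} [DecidableEq ι] [AddCommMonoid M]
    [PartialOrder M] [IsOrderedAddMonoid M] {s : Finset ι} {f g : ι → M} {a b : M} {j : ι} (hj : j ∈ s)
    (hfg : ∀ k ∈ s, k ≠ j → f k ≤ g k) (hfgj : f j + a ≤ g j + b) :
    ∑ k ∈ s, f k + a ≤ ∑ k ∈ s, g k + b := by
  rw [← sum_erase_add s f hj, ← sum_erase_add s g hj, add_assoc, add_assoc]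
  exact add_le_add (sum_le_sum fun k hk => hfg k (mem_of_mem_erase hk) (ne_of_mem_erase hk)) hfgj

theorem graph_subset_zone_general (m n : ℕ)
    (w : Fin n → Fin m → ℝ) (b : Fin n → ℝ)
    (xl xu : Fin m → ℝ)
    (mlow Mup : Fin n → ℝ)
    (hmlow : ∀ i, mlow i = b i + ∑ j, w i j * (if w i j < 0 then xu j else xl j))
    (hMup : ∀ i, Mup i = b i + ∑ j, w i j * (if w i j < 0 then xl j else xu j))
    (Delta : Fin n → Fin n → ℝ) (delta : Fin n → Fin m → ℝ)
    (hDelta : ∀ i₁ i₂, Delta i₁ i₂ = (b i₁ - b i₂) +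
        ∑ j, (w i₁ j - w i₂ j) * (if w i₁ j < w i₂ j then xl j else xu j))
    (hdelta : ∀ i j, delta i j = if w i j ≤ 0 then 0
        else if w i j ≤ 1 then w i j * (xu j - xl j) else xu j - xl j) :
    ∀ x : Fin m → ℝ, (∀ j, xl j ≤ x j ∧ x j ≤ xu j) →
    ∀ y : Fin n → ℝ, (∀ i, y i = ∑ j, w i j * x j + b i) →
      ((∀ j, xl j ≤ x j ∧ x j ≤ xu j) ∧
        (∀ i, mlow i ≤ y i ∧ y i ≤ Mup i) ∧
        (∀ i₁ i₂, y i₁ - y i₂ ≤ Delta i₁ i₂) ∧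
        (∀ i j, mlow i - xu j + delta i j ≤ y i - x j ∧
          y i - x j ≤ Mup i - xl j - delta i j)) := by
  intro x hx y hy
  change ∀ i, mlow i = b i + ∑ j, w i j * lowerCorner (w i j) (xl j) (xu j) at hmlow
  change ∀ i, Mup i = b i + ∑ j, w i j * upperCorner (w i j) (xl j) (xu j) at hMup
  change ∀ i j, delta i j = zoneDelta (w i j) (xl j) (xu j) at hdelta
  have hlow (c : Fin m → ℝ) (j : Fin m) : c j * lowerCorner (c j) (xl j) (xu j) ≤ c j * x j :=
    mul_lowerCorner_le (hx j).1 (hx j).2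
  have hup (c : Fin m → ℝ) (j : Fin m) : c j * x j ≤ c j * upperCorner (c j) (xl j) (xu j) :=
    mul_le_mul_upperCorner (hx j).1 (hx j).2
  refine ⟨hx, fun i => ⟨?_, ?_⟩, fun i₁ i₂ => ?_, fun i j => ⟨?_, ?_⟩⟩
  · have hsum := sum_le_sum fun j (_ : j ∈ univ) => hlow (w i) j
    rw [hmlow, hy]
    linarith
  · have hsum := sum_le_sum fun j (_ : j ∈ univ) => hup (w i) j
    rw [hMup, hy]
    linarith
  · have hsum := sum_le_sum fun j (_ : j ∈ univ) => hup (w i₁ - w i₂) j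
    simp only [Pi.sub_apply, upperCorner, sub_neg] at hsum
    rw [hDelta, hy, hy]
    linarith [show ∑ j, (w i₁ j - w i₂ j) * x j = ∑ j, w i₁ j * x j - ∑ j, w i₂ j * x j by
      simp only [sub_mul, sum_sub_distrib]]
  · have hsum := sum_add_le_sum_add_of_le_of_ne (mem_univ j) (fun k _ _ => hlow (w i) k)
      (mul_lowerCorner_sub_add_zoneDelta_le (hx j).1 (hx j).2)
    rw [hmlow, hy, hdelta]
    linarith
  · have hsum := sum_add_le_sum_add_of_le_of_ne (mem_univ j) (fun k _ _ => hup (w i) k)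
      (le_mul_upperCorner_sub_sub_zoneDelta (hx j).1 (hx j).2)
    rw [hMup, hy, hdelta]
    linarith

theorem graph_subset_zone (m n : ℕ) (hm : 1 ≤ m) (hn : 1 ≤ n)
    (w : Fin n → Fin m → ℝ) (b : Fin n → ℝ)
    (xl xu : Fin m → ℝ) (hbounds : ∀ j, xl j ≤ xu j)
    (mlow Mup : Fin n → ℝ)
    (hmlow : ∀ i, mlow i = b i + ∑ j, w i j * (if w i j < 0 then xu j else xl j))
    (hMup : ∀ i, Mup i = b i + ∑ j, w i j * (if w i j < 0 then xl j else xu j))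
    (Delta : Fin n → Fin n → ℝ) (delta : Fin n → Fin m → ℝ)
    (hDelta : ∀ i₁ i₂, Delta i₁ i₂ = (b i₁ - b i₂) +
        ∑ j, (w i₁ j - w i₂ j) * (if w i₁ j < w i₂ j then xl j else xu j))
    (hdelta : ∀ i j, delta i j = if w i j ≤ 0 then 0
        else if w i j ≤ 1 then w i j * (xu j - xl j) else xu j - xl j) :
    ∀ x : Fin m → ℝ, (∀ j, xl j ≤ x j ∧ x j ≤ xu j) →
    ∀ y : Fin n → ℝ, (∀ i, y i = ∑ j, w i j * x j + b i) →
      ((∀ j, xl j ≤ x j ∧ x j ≤ xu j) ∧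
        (∀ i, mlow i ≤ y i ∧ y i ≤ Mup i) ∧
        (∀ i₁ i₂, y i₁ - y i₂ ≤ Delta i₁ i₂) ∧
        (∀ i j, mlow i - xu j + delta i j ≤ y i - x j ∧
          y i - x j ≤ Mup i - xl j - delta i j)) :=
  graph_subset_zone_general m n w b xl xu mlow Mup hmlow hMup Delta delta hDelta hdelta
end

section
/- Z_f is the tightest zone containing S, in the following sense: for every pair of indices α, β ∈ {0,1,…,m+n} (where coordinate 0 of a point of ℝ^{m+n} is by convention the constant 0) and every real constant c, if every point p of S satisfies p_α − p_β ≤ c, then every point q of Z_f satisfies q_α − q_β ≤ c. -/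
/-!
For each pair of coordinates `α, β`, the map `x ↦ p_α - p_β` with `p = (x, f x)` is affine in
`x`, so its maximum over the box `K` is its constant term plus the support function of `K` at its
linear part, and this maximum is attained at a vertex of `K`. Each constraint of `Z_f` bounds
`q_α - q_β` by exactly this maximum (the box constraints take care of the pairs not involving `y`),
so any bound `c` valid on `S` is valid on `Z_f`.
-/

/-- Coordinates of a point `(x, y) ∈ ℝ^(m+n)` indexed by `{0, 1, …, m+n}`,
where coordinate `0` (= `none`) is by convention the constant `0`. -/
def coord0 {m n : ℕ} (x : Fin m → ℝ) (y : Fin n → ℝ) (a : Option (Fin m ⊕ Fin n)) : ℝ :=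
  Option.elim a 0 (Sum.elim x y)

open Finset

lemma mul_ite_neg_eq_max {c l u : ℝ} (h : l ≤ u) :
    c * (if c < 0 then l else u) = max (c * l) (c * u) := by
  split_ifs with hc
  · exact (max_eq_left (mul_le_mul_of_nonpos_left h hc.le)).symm
  · exact (max_eq_right (mul_le_mul_of_nonneg_left h (not_lt.mp hc))).symm

lemma mul_ite_neg_eq_min {c l u : ℝ} (h : l ≤ u) :
    c * (if c < 0 then u else l) = min (c * l) (c * u) := by
  split_ifs with hc
  · exact (min_eq_right (mul_le_mul_of_nonpos_left h hc.le)).symm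
  · exact (min_eq_left (mul_le_mul_of_nonneg_left h (not_lt.mp hc))).symm

lemma max_one_sub_mul_sub_max_neg_mul {w l u : ℝ} (h : l ≤ u) :
    max ((1 - w) * l) ((1 - w) * u) - max (-w * l) (-w * u) =
      u - if w ≤ 0 then 0 else if w ≤ 1 then w * (u - l) else u - l := by
  split_ifs <;> simp only [max_def] <;> split_ifs <;> nlinarith

lemma max_sub_one_mul_sub_max_mul {w l u : ℝ} (h : l ≤ u) :
    max ((w - 1) * l) ((w - 1) * u) - max (w * l) (w * u) =
      -l - if w ≤ 0 then 0 else if w ≤ 1 then w * (u - l) else u - l := by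
  split_ifs <;> simp only [max_def] <;> split_ifs <;> nlinarith

section BoxSupport

variable {ι : Type*} [Fintype ι]

def boxSupport (l u c : ι → ℝ) : ℝ := ∑ j, max (c j * l j) (c j * u j)

variable {l u : ι → ℝ}

lemma boxSupport_eq_sum_mul_ite (h : ∀ j, l j ≤ u j) (c : ι → ℝ) :
    boxSupport l u c = ∑ j, c j * (if c j < 0 then l j else u j) :=
  sum_congr rfl fun j _ => (mul_ite_neg_eq_max (h j)).symm

lemma boxSupport_neg (h : ∀ j, l j ≤ u j) (c : ι → ℝ) :
    boxSupport l u (-c) = -∑ j, c j * (if c j < 0 then u j else l j) := by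
  simp only [boxSupport, Pi.neg_apply, neg_mul, max_neg_neg, mul_ite_neg_eq_min (h _),
    sum_neg_distrib]

lemma sum_mul_le_boxSupport {x : ι → ℝ} (hx : ∀ j, l j ≤ x j ∧ x j ≤ u j) (c : ι → ℝ) :
    ∑ j, c j * x j ≤ boxSupport l u c :=
  sum_le_sum fun j _ => by
    rcases le_total 0 (c j) with hc | hc
    · exact le_max_of_le_right (mul_le_mul_of_nonneg_left (hx j).2 hc)
    · exact le_max_of_le_left (mul_le_mul_of_nonpos_left (hx j).1 hc)

lemma exists_sum_mul_eq_boxSupport (h : ∀ j, l j ≤ u j) (c : ι → ℝ) :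
    ∃ x : ι → ℝ, (∀ j, l j ≤ x j ∧ x j ≤ u j) ∧ ∑ j, c j * x j = boxSupport l u c :=
  ⟨fun j => if c j < 0 then l j else u j, fun j => by dsimp only; split_ifs <;> simp [h j],
    (boxSupport_eq_sum_mul_ite h c).symm⟩

lemma boxSupport_add_single [DecidableEq ι] (c : ι → ℝ) (j : ι) (t : ℝ) :
    boxSupport l u (c + Pi.single j t) = boxSupport l u c +
      (max ((c j + t) * l j) ((c j + t) * u j) - max (c j * l j) (c j * u j)) := by
  rw [boxSupport, boxSupport, ← sub_eq_iff_eq_add', ← sum_sub_distrib]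
  refine (Fintype.sum_eq_single j fun k hk => ?_).trans (by simp)
  simp [hk]

end BoxSupport

section Graph

variable {m n : ℕ} (w : Fin n → Fin m → ℝ) (b : Fin n → ℝ)

def graphCoeff (a : Option (Fin m ⊕ Fin n)) : Fin m → ℝ :=
  Option.elim a 0 (Sum.elim (fun j => Pi.single j 1) w)

def graphConst (a : Option (Fin m ⊕ Fin n)) : ℝ :=
  Option.elim a 0 (Sum.elim 0 b)

lemma coord0_graph (x : Fin m → ℝ) (a : Option (Fin m ⊕ Fin n)) :
    coord0 x (fun i => ∑ j, w i j * x j + b i) a = ∑ j, graphCoeff w a j * x j + graphConst b a := by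
  rcases a with _ | j | i <;> simp [coord0, graphCoeff, graphConst, Pi.single_apply]

lemma coord0_graph_sub (x : Fin m → ℝ) (a be : Option (Fin m ⊕ Fin n)) :
    coord0 x (fun i => ∑ j, w i j * x j + b i) a - coord0 x (fun i => ∑ j, w i j * x j + b i) be =
      ∑ j, (graphCoeff w a - graphCoeff w be) j * x j + (graphConst b a - graphConst b be) := by
  simp only [coord0_graph, Pi.sub_apply, sub_mul, sum_sub_distrib]
  ring

end Graph

theorem zone_coord_sub_le {m n : ℕ} (w : Fin n → Fin m → ℝ) (b : Fin n → ℝ)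
    (xl xu : Fin m → ℝ) (hbounds : ∀ j, xl j ≤ xu j)
    (mlow Mup : Fin n → ℝ)
    (hmlow : ∀ i, mlow i = b i + ∑ j, w i j * (if w i j < 0 then xu j else xl j))
    (hMup : ∀ i, Mup i = b i + ∑ j, w i j * (if w i j < 0 then xl j else xu j))
    (Delta : Fin n → Fin n → ℝ) (delta : Fin n → Fin m → ℝ)
    (hDelta : ∀ i₁ i₂, Delta i₁ i₂ = (b i₁ - b i₂) +
        ∑ j, (w i₁ j - w i₂ j) * (if w i₁ j < w i₂ j then xl j else xu j))
    (hdelta : ∀ i j, delta i j = if w i j ≤ 0 then 0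
        else if w i j ≤ 1 then w i j * (xu j - xl j) else xu j - xl j)
    {x : Fin m → ℝ} {y : Fin n → ℝ}
    (hZ : (∀ j, xl j ≤ x j ∧ x j ≤ xu j) ∧
        (∀ i, mlow i ≤ y i ∧ y i ≤ Mup i) ∧
        (∀ i₁ i₂, y i₁ - y i₂ ≤ Delta i₁ i₂) ∧
        (∀ i j, mlow i - xu j + delta i j ≤ y i - x j ∧
          y i - x j ≤ Mup i - xl j - delta i j))
    (a be : Option (Fin m ⊕ Fin n)) :
    coord0 x y a - coord0 x y be ≤
      graphConst b a - graphConst b be + boxSupport xl xu (graphCoeff w a - graphCoeff w be) := by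
  obtain ⟨hx, hy, hyy, hxy⟩ := hZ
  -- On the coordinates `0` and `x_j`, the point `(x, y)` agrees with the point `(x, f x)` of `S`.
  have hgraph (a be : Option (Fin m ⊕ Fin n)) :
      coord0 x (fun i => ∑ j, w i j * x j + b i) a - coord0 x (fun i => ∑ j, w i j * x j + b i) be ≤
        graphConst b a - graphConst b be + boxSupport xl xu (graphCoeff w a - graphCoeff w be) := by
    rw [coord0_graph_sub]
    linarith [sum_mul_le_boxSupport hx (graphCoeff w a - graphCoeff w be)]
  match a, be with
  | none, none => exact hgraph none none
  | none, some (.inl j) => exact hgraph none (some (.inl j))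
  | some (.inl j), none => exact hgraph (some (.inl j)) none
  | some (.inl j₁), some (.inl j₂) => exact hgraph (some (.inl j₁)) (some (.inl j₂))
  | some (.inr i), none =>
    show y i - 0 ≤ b i - 0 + boxSupport xl xu (w i - 0)
    rw [sub_zero, sub_zero, sub_zero, boxSupport_eq_sum_mul_ite hbounds]
    linarith [(hy i).2, hMup i]
  | none, some (.inr i) =>
    show 0 - y i ≤ 0 - b i + boxSupport xl xu (0 - w i)
    simp only [zero_sub, boxSupport_neg hbounds]
    linarith [(hy i).1, hmlow i]
  | some (.inr i₁), some (.inr i₂) =>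
    show y i₁ - y i₂ ≤ b i₁ - b i₂ + boxSupport xl xu (w i₁ - w i₂)
    simp only [boxSupport_eq_sum_mul_ite hbounds, Pi.sub_apply, sub_neg]
    linarith [hyy i₁ i₂, hDelta i₁ i₂]
  | some (.inl j), some (.inr i) =>
    show x j - y i ≤ 0 - b i + boxSupport xl xu (Pi.single j 1 - w i)
    rw [← neg_add_eq_sub (w i), boxSupport_add_single, boxSupport_neg hbounds]
    simp only [Pi.neg_apply, neg_add_eq_sub, max_one_sub_mul_sub_max_neg_mul (hbounds j)]
    linarith [(hxy i j).1, hmlow i, hdelta i j]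
  | some (.inr i), some (.inl j) =>
    show y i - x j ≤ b i - 0 + boxSupport xl xu (w i - Pi.single j 1)
    rw [sub_eq_add_neg (w i), ← Pi.single_neg, boxSupport_add_single,
      boxSupport_eq_sum_mul_ite hbounds, ← sub_eq_add_neg, max_sub_one_mul_sub_max_mul (hbounds j)]
    linarith [(hxy i j).2, hMup i, hdelta i j]

theorem zone_tightest_general (m n : ℕ)
    (w : Fin n → Fin m → ℝ) (b : Fin n → ℝ)
    (xl xu : Fin m → ℝ) (hbounds : ∀ j, xl j ≤ xu j)
    (mlow Mup : Fin n → ℝ)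
    (hmlow : ∀ i, mlow i = b i + ∑ j, w i j * (if w i j < 0 then xu j else xl j))
    (hMup : ∀ i, Mup i = b i + ∑ j, w i j * (if w i j < 0 then xl j else xu j))
    (Delta : Fin n → Fin n → ℝ) (delta : Fin n → Fin m → ℝ)
    (hDelta : ∀ i₁ i₂, Delta i₁ i₂ = (b i₁ - b i₂) +
        ∑ j, (w i₁ j - w i₂ j) * (if w i₁ j < w i₂ j then xl j else xu j))
    (hdelta : ∀ i j, delta i j = if w i j ≤ 0 then 0
        else if w i j ≤ 1 then w i j * (xu j - xl j) else xu j - xl j) :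
    ∀ (a be : Option (Fin m ⊕ Fin n)) (cst : ℝ),
      (∀ x : Fin m → ℝ, (∀ j, xl j ≤ x j ∧ x j ≤ xu j) →
        coord0 x (fun i => ∑ j, w i j * x j + b i) a
          - coord0 x (fun i => ∑ j, w i j * x j + b i) be ≤ cst) →
      ∀ (x : Fin m → ℝ) (y : Fin n → ℝ),
        ((∀ j, xl j ≤ x j ∧ x j ≤ xu j) ∧
        (∀ i, mlow i ≤ y i ∧ y i ≤ Mup i) ∧
        (∀ i₁ i₂, y i₁ - y i₂ ≤ Delta i₁ i₂) ∧
        (∀ i j, mlow i - xu j + delta i j ≤ y i - x j ∧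
          y i - x j ≤ Mup i - xl j - delta i j)) →
        coord0 x y a - coord0 x y be ≤ cst := by
  intro a be cst hS x y hZ
  obtain ⟨v, hvK, hv⟩ := exists_sum_mul_eq_boxSupport hbounds (graphCoeff w a - graphCoeff w be)
  have hSv := hS v hvK
  rw [coord0_graph_sub, hv] at hSv
  have hZ_le := zone_coord_sub_le w b xl xu hbounds mlow Mup hmlow hMup Delta delta hDelta hdelta
    hZ a be
  linarith

theorem zone_tightest (m n : ℕ) (hm : 1 ≤ m) (hn : 1 ≤ n)
    (w : Fin n → Fin m → ℝ) (b : Fin n → ℝ)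
    (xl xu : Fin m → ℝ) (hbounds : ∀ j, xl j ≤ xu j)
    (mlow Mup : Fin n → ℝ)
    (hmlow : ∀ i, mlow i = b i + ∑ j, w i j * (if w i j < 0 then xu j else xl j))
    (hMup : ∀ i, Mup i = b i + ∑ j, w i j * (if w i j < 0 then xl j else xu j))
    (Delta : Fin n → Fin n → ℝ) (delta : Fin n → Fin m → ℝ)
    (hDelta : ∀ i₁ i₂, Delta i₁ i₂ = (b i₁ - b i₂) +
        ∑ j, (w i₁ j - w i₂ j) * (if w i₁ j < w i₂ j then xl j else xu j))
    (hdelta : ∀ i j, delta i j = if w i j ≤ 0 then 0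
        else if w i j ≤ 1 then w i j * (xu j - xl j) else xu j - xl j) :
    ∀ (a be : Option (Fin m ⊕ Fin n)) (cst : ℝ),
      (∀ x : Fin m → ℝ, (∀ j, xl j ≤ x j ∧ x j ≤ xu j) →
        coord0 x (fun i => ∑ j, w i j * x j + b i) a
          - coord0 x (fun i => ∑ j, w i j * x j + b i) be ≤ cst) →
      ∀ (x : Fin m → ℝ) (y : Fin n → ℝ),
        ((∀ j, xl j ≤ x j ∧ x j ≤ xu j) ∧
        (∀ i, mlow i ≤ y i ∧ y i ≤ Mup i) ∧
        (∀ i₁ i₂, y i₁ - y i₂ ≤ Delta i₁ i₂) ∧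
        (∀ i j, mlow i - xu j + delta i j ≤ y i - x j ∧
          y i - x j ≤ Mup i - xl j - delta i j)) →
        coord0 x y a - coord0 x y be ≤ cst :=
  zone_tightest_general m n w b xl xu hbounds mlow Mup hmlow hMup Delta delta hDelta hdelta
end

section
/- The zone Z_f equals the set of (x,y) ∈ ℝ^{m+n} satisfying the following m+n+1 tropical affine inequalities: (1) max(max_{1≤j≤m}(x_j − x̄_j), max_{1≤i≤n}(y_i − M_i)) ≤ 0; (2) for each j ∈ {1,…,m}: max(0, max_{1≤i≤n}(y_i − M_i + δ_{i,j})) ≤ x_j − x̲_j; (3) for each i ∈ {1,…,n}: max(0, max_{1≤j≤m}(x_j − x̄_j + δ_{i,j}), max_{i'≠i}(y_{i'} − d_{i',i})) ≤ y_i − m_i, where d_{i₁,i₂} := Δ_{i₁,i₂} + m_{i₂}. -/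
theorem zone_eq_external_tropical (m n : ℕ) (hm : 1 ≤ m) (hn : 1 ≤ n)
    (w : Fin n → Fin m → ℝ) (b : Fin n → ℝ)
    (xl xu : Fin m → ℝ) (hbounds : ∀ j, xl j ≤ xu j)
    (mlow Mup : Fin n → ℝ)
    (hmlow : ∀ i, mlow i = b i + ∑ j, w i j * (if w i j < 0 then xu j else xl j))
    (hMup : ∀ i, Mup i = b i + ∑ j, w i j * (if w i j < 0 then xl j else xu j))
    (Delta : Fin n → Fin n → ℝ) (delta : Fin n → Fin m → ℝ)
    (hDelta : ∀ i₁ i₂, Delta i₁ i₂ = (b i₁ - b i₂) +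
        ∑ j, (w i₁ j - w i₂ j) * (if w i₁ j < w i₂ j then xl j else xu j))
    (hdelta : ∀ i j, delta i j = if w i j ≤ 0 then 0
        else if w i j ≤ 1 then w i j * (xu j - xl j) else xu j - xl j) :
    ∀ (x : Fin m → ℝ) (y : Fin n → ℝ),
      ((∀ j, xl j ≤ x j ∧ x j ≤ xu j) ∧
        (∀ i, mlow i ≤ y i ∧ y i ≤ Mup i) ∧
        (∀ i₁ i₂, y i₁ - y i₂ ≤ Delta i₁ i₂) ∧
        (∀ i j, mlow i - xu j + delta i j ≤ y i - x j ∧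
          y i - x j ≤ Mup i - xl j - delta i j)) ↔
      (max (⨆ j, x j - xu j) (⨆ i, y i - Mup i) ≤ 0 ∧
       (∀ j, max 0 (⨆ i, y i - Mup i + delta i j) ≤ x j - xl j) ∧
       (∀ i, max 0 (max (⨆ j, x j - xu j + delta i j)
            (⨆ i' : {i' : Fin n // i' ≠ i}, y i'.1 - (Delta i'.1 i + mlow i)))
          ≤ y i - mlow i)) := by
  have hmpos : Nonempty (Fin m) := ⟨⟨0, hm⟩⟩
  have hnpos : Nonempty (Fin n) := ⟨⟨0, hn⟩⟩
  have hDii : ∀ i, Delta i i = 0 := by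
    intro i; rw [hDelta]; simp
  intro x y
  constructor
  · rintro ⟨hx, hy, hD, hxy⟩
    refine ⟨max_le (ciSup_le fun j => by linarith [(hx j).2])
        (ciSup_le fun i => by linarith [(hy i).2]), ?_, ?_⟩
    · intro j
      refine max_le (by linarith [(hx j).1]) (ciSup_le fun i => ?_)
      linarith [(hxy i j).2]
    · intro i
      refine max_le (by linarith [(hy i).1])
        (max_le (ciSup_le fun j => by linarith [(hxy i j).1])
          ?_)
      rcases isEmpty_or_nonempty {i' : Fin n // i' ≠ i} with he | hne
      · rw [Real.iSup_of_isEmpty]; linarith [(hy i).1]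
      · exact ciSup_le fun i' => by linarith [hD i'.1 i, (hy i).1]
  · rintro ⟨h1, h2, h3⟩
    have hxu : ∀ j, x j ≤ xu j := fun j => by
      have := le_trans (le_ciSup (Finite.bddAbove_range _) j) (le_trans (le_max_left _ _) h1)
      linarith
    have hyM : ∀ i, y i ≤ Mup i := fun i => by
      have := le_trans (le_ciSup (Finite.bddAbove_range _) i) (le_trans (le_max_right _ _) h1)
      linarith
    have hxl : ∀ j, xl j ≤ x j := fun j => by
      have := le_trans (le_max_left _ _) (h2 j); linarith
    have hym : ∀ i, mlow i ≤ y i := fun i => by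
      have := le_trans (le_max_left _ _) (h3 i); linarith
    refine ⟨fun j => ⟨hxl j, hxu j⟩, fun i => ⟨hym i, hyM i⟩, ?_, ?_⟩
    · intro i₁ i₂
      rcases eq_or_ne i₁ i₂ with rfl | hne
      · rw [hDii]; linarith
      · have := le_trans (le_ciSup (Finite.bddAbove_range
          (fun i' : {i' : Fin n // i' ≠ i₂} => y i'.1 - (Delta i'.1 i₂ + mlow i₂))) ⟨i₁, hne⟩)
          (le_trans (le_max_right _ _) (le_trans (le_max_right _ _) (h3 i₂)))
        simpa using by linarith
    · intro i j
      constructor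
      · have := le_trans (le_ciSup (Finite.bddAbove_range
          (fun j => x j - xu j + delta i j)) j)
          (le_trans (le_max_left _ _) (le_trans (le_max_right _ _) (h3 i)))
        linarith
      · have := le_trans (le_ciSup (Finite.bddAbove_range
          (fun i => y i - Mup i + delta i j)) i) (le_trans (le_max_right _ _) (h2 j))
        linarith
end

section
/- The zone Z_f equals the tropical convex hull of the following m+n+1 points of ℝ^{m+n}: A = (x̲_1,…,x̲_m, m_1,…,m_n); for each j ∈ {1,…,m}, B_j whose input coordinates are x̲_{j'} for j' ≠ j and x̄_j in position j, and whose output coordinates are m_i + δ_{i,j} for i = 1,…,n; and for each i ∈ {1,…,n}, C_i whose input coordinates are x̲_j + δ_{i,j} for j = 1,…,m, and whose output coordinates are M_i in position i and c_{i,i'} := M_i − Δ_{i,i'} in positions i' ≠ i. -/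
-- Termwise inequality lemmas
lemma tD_nonneg {a c : ℝ} (h : a ≤ c) (w : ℝ) :
    0 ≤ (if w ≤ 0 then (0:ℝ) else if w ≤ 1 then w * (c - a) else c - a) := by
  split_ifs <;> nlinarith

lemma tD_le {a c : ℝ} (h : a ≤ c) (w : ℝ) :
    (if w ≤ 0 then (0:ℝ) else if w ≤ 1 then w * (c - a) else c - a) ≤ c - a := by
  split_ifs <;> nlinarith

lemma tT_le_S {a c : ℝ} (h : a ≤ c) (w : ℝ) :
    w * (if w < 0 then c else a) ≤ w * (if w < 0 then a else c) := by
  split_ifs <;> nlinarith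

lemma tD_le_term {a c : ℝ} (h : a ≤ c) (w : ℝ) :
    w * (if w < 0 then c else a) + (if w ≤ 0 then (0:ℝ) else if w ≤ 1 then w * (c - a) else c - a)
      ≤ w * (if w < 0 then a else c) := by
  split_ifs <;> nlinarith

lemma t4 {a c : ℝ} (h : a ≤ c) (w₁ w₂ : ℝ) :
    (w₁ - w₂) * (if w₁ < w₂ then a else c)
      ≤ w₁ * (if w₁ < 0 then a else c) - w₂ * (if w₂ < 0 then c else a) := by
  split_ifs <;> nlinarith

lemma t5 {a c : ℝ} (h : a ≤ c) (w₁ w₂ : ℝ) :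
    w₁ * (if w₁ < 0 then a else c) - w₂ * (if w₂ < 0 then a else c)
      ≤ (w₁ - w₂) * (if w₁ < w₂ then a else c) := by
  split_ifs <;> nlinarith

lemma t6 {a c : ℝ} (h : a ≤ c) (w₁ w₂ : ℝ) :
    w₁ * (if w₁ < 0 then c else a) - w₂ * (if w₂ < 0 then c else a)
      ≤ (w₁ - w₂) * (if w₁ < w₂ then a else c) := by
  split_ifs <;> nlinarith

lemma t7 {a c : ℝ} (h : a ≤ c) (w₁ w₂ : ℝ) :
    (w₁ * (if w₁ < 0 then c else a) + (if w₁ ≤ 0 then (0:ℝ) else if w₁ ≤ 1 then w₁ * (c - a) else c - a))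
      - (w₂ * (if w₂ < 0 then c else a) + (if w₂ ≤ 0 then (0:ℝ) else if w₂ ≤ 1 then w₂ * (c - a) else c - a))
      ≤ (w₁ - w₂) * (if w₁ < w₂ then a else c) := by
  split_ifs <;> nlinarith

lemma t8 {a c : ℝ} (h : a ≤ c) (w₁ w₂ : ℝ) :
    0 ≤ (w₁ - w₂) * (if w₁ < w₂ then a else c) + (w₂ - w₁) * (if w₂ < w₁ then a else c) := by
  split_ifs <;> nlinarith

lemma t9 {a c : ℝ} (h : a ≤ c) (w₁ w₂ w₃ : ℝ) :
    (w₃ - w₂) * (if w₃ < w₂ then a else c)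
      ≤ (w₃ - w₁) * (if w₃ < w₁ then a else c) + (w₁ - w₂) * (if w₁ < w₂ then a else c) := by
  split_ifs <;> nlinarith

lemma t10 {a c : ℝ} (h : a ≤ c) (w₁ w₂ : ℝ) :
    (w₁ * (if w₁ < 0 then a else c) - (if w₁ ≤ 0 then (0:ℝ) else if w₁ ≤ 1 then w₁ * (c - a) else c - a))
      - (w₂ * (if w₂ < 0 then a else c) - (if w₂ ≤ 0 then (0:ℝ) else if w₂ ≤ 1 then w₂ * (c - a) else c - a))
      ≤ (w₁ - w₂) * (if w₁ < w₂ then a else c) := by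
  split_ifs <;> nlinarith

lemma t11 {a c : ℝ} (h : a ≤ c) (w₁ w₂ : ℝ) :
    (w₁ - w₂) * (if w₁ < w₂ then a else c)
      ≤ (w₁ * (if w₁ < 0 then a else c) - (if w₁ ≤ 0 then (0:ℝ) else if w₁ ≤ 1 then w₁ * (c - a) else c - a))
      - (w₂ * (if w₂ < 0 then c else a) + (if w₂ ≤ 0 then (0:ℝ) else if w₂ ≤ 1 then w₂ * (c - a) else c - a))
      + (c - a) := by
  split_ifs <;> nlinarith

/-- the generators -/
def gens {m n : ℕ} (xl xu : Fin m → ℝ) (mlow Mup : Fin n → ℝ)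
    (Delta : Fin n → Fin n → ℝ) (delta : Fin n → Fin m → ℝ)
    (g : Option (Fin m ⊕ Fin n)) : (Fin m ⊕ Fin n) → ℝ :=
  Option.elim g (Sum.elim xl mlow)
    (Sum.elim
      (fun j => Sum.elim (fun j' => if j' = j then xu j else xl j')
          (fun i => mlow i + delta i j))
      (fun i => Sum.elim (fun j => xl j + delta i j)
          (fun i' => if i' = i then Mup i else Mup i - Delta i i')))

theorem zone_eq_internal_tropical (m n : ℕ) (hm : 1 ≤ m) (hn : 1 ≤ n)
    (w : Fin n → Fin m → ℝ) (b : Fin n → ℝ)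
    (xl xu : Fin m → ℝ) (hbounds : ∀ j, xl j ≤ xu j)
    (mlow Mup : Fin n → ℝ)
    (hmlow : ∀ i, mlow i = b i + ∑ j, w i j * (if w i j < 0 then xu j else xl j))
    (hMup : ∀ i, Mup i = b i + ∑ j, w i j * (if w i j < 0 then xl j else xu j))
    (Delta : Fin n → Fin n → ℝ) (delta : Fin n → Fin m → ℝ)
    (hDelta : ∀ i₁ i₂, Delta i₁ i₂ = (b i₁ - b i₂) +
        ∑ j, (w i₁ j - w i₂ j) * (if w i₁ j < w i₂ j then xl j else xu j))
    (hdelta : ∀ i j, delta i j = if w i j ≤ 0 then 0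
        else if w i j ≤ 1 then w i j * (xu j - xl j) else xu j - xl j) :
    ∀ (x : Fin m → ℝ) (y : Fin n → ℝ),
      ((∀ j, xl j ≤ x j ∧ x j ≤ xu j) ∧
        (∀ i, mlow i ≤ y i ∧ y i ≤ Mup i) ∧
        (∀ i₁ i₂, y i₁ - y i₂ ≤ Delta i₁ i₂) ∧
        (∀ i j, mlow i - xu j + delta i j ≤ y i - x j ∧
          y i - x j ≤ Mup i - xl j - delta i j)) ↔
      Sum.elim x y ∈ tconv (fun g : Option (Fin m ⊕ Fin n) =>
        Option.elim g (Sum.elim xl mlow)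
          (Sum.elim
            (fun j => Sum.elim (fun j' => if j' = j then xu j else xl j')
                (fun i => mlow i + delta i j))
            (fun i => Sum.elim (fun j => xl j + delta i j)
                (fun i' => if i' = i then Mup i else Mup i - Delta i i')))) := by
  -- Global inequalities
  have hd0 : ∀ i j, 0 ≤ delta i j := fun i j => by rw [hdelta]; exact tD_nonneg (hbounds j) _
  have hdle : ∀ i j, delta i j ≤ xu j - xl j := fun i j => by rw [hdelta]; exact tD_le (hbounds j) _
  have hterm0 : ∀ i, ∀ j ∈ Finset.univ, (0:ℝ) ≤
      w i j * (if w i j < 0 then xl j else xu j) - w i j * (if w i j < 0 then xu j else xl j) := by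
    intro i j _
    have := tT_le_S (hbounds j) (w i j); linarith
  have G1 : ∀ i j, mlow i + delta i j ≤ Mup i := by
    intro i j
    have h2 := Finset.single_le_sum (hterm0 i) (Finset.mem_univ j)
    rw [Finset.sum_sub_distrib] at h2
    have h3 := tD_le_term (hbounds j) (w i j)
    rw [hmlow i, hMup i, hdelta i j]
    linarith
  have G2 : ∀ i j j', j ≠ j' → mlow i + delta i j + delta i j' ≤ Mup i := by
    intro i j j' hjj
    have h2 := Finset.add_le_sum (hterm0 i) (Finset.mem_univ j) (Finset.mem_univ j') hjj
    rw [Finset.sum_sub_distrib] at h2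
    have h3 := tD_le_term (hbounds j) (w i j)
    have h4 := tD_le_term (hbounds j') (w i j')
    rw [hmlow i, hMup i, hdelta i j, hdelta i j']
    linarith
  have G0 : ∀ i, mlow i ≤ Mup i := fun i => by
    have := G1 i ⟨0, hm⟩; have := hd0 i ⟨0, hm⟩; linarith
  have G3 : ∀ i j, mlow i + 2 * delta i j ≤ Mup i + (xu j - xl j) := fun i j => by
    have := G1 i j; have := hdle i j; linarith
  have G4 : ∀ i' i, Delta i' i ≤ Mup i' - mlow i := by
    intro i' i
    have h : ∑ j, (w i' j - w i j) * (if w i' j < w i j then xl j else xu j)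
        ≤ ∑ j, (w i' j * (if w i' j < 0 then xl j else xu j)
            - w i j * (if w i j < 0 then xu j else xl j)) :=
      Finset.sum_le_sum fun j _ => t4 (hbounds j) _ _
    rw [Finset.sum_sub_distrib] at h
    rw [hDelta, hMup, hmlow]; linarith
  have G5 : ∀ i' i, Mup i' - Mup i ≤ Delta i' i := by
    intro i' i
    have h : ∑ j, (w i' j * (if w i' j < 0 then xl j else xu j)
            - w i j * (if w i j < 0 then xl j else xu j))
        ≤ ∑ j, (w i' j - w i j) * (if w i' j < w i j then xl j else xu j) :=
      Finset.sum_le_sum fun j _ => t5 (hbounds j) _ _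
    rw [Finset.sum_sub_distrib] at h
    rw [hDelta, hMup, hMup]; linarith
  have G6 : ∀ i₁ i₂, mlow i₁ - mlow i₂ ≤ Delta i₁ i₂ := by
    intro i₁ i₂
    have h : ∑ j, (w i₁ j * (if w i₁ j < 0 then xu j else xl j)
            - w i₂ j * (if w i₂ j < 0 then xu j else xl j))
        ≤ ∑ j, (w i₁ j - w i₂ j) * (if w i₁ j < w i₂ j then xl j else xu j) :=
      Finset.sum_le_sum fun j _ => t6 (hbounds j) _ _
    rw [Finset.sum_sub_distrib] at h
    rw [hDelta, hmlow, hmlow]; linarith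
  have GDself : ∀ i, Delta i i = 0 := fun i => by rw [hDelta]; simp
  have G8 : ∀ i₁ i₂, 0 ≤ Delta i₁ i₂ + Delta i₂ i₁ := by
    intro i₁ i₂
    have h : (0:ℝ) ≤ ∑ j, ((w i₁ j - w i₂ j) * (if w i₁ j < w i₂ j then xl j else xu j)
        + (w i₂ j - w i₁ j) * (if w i₂ j < w i₁ j then xl j else xu j)) :=
      Finset.sum_nonneg fun j _ => t8 (hbounds j) _ _
    rw [Finset.sum_add_distrib] at h
    rw [hDelta, hDelta]; linarith
  have G9 : ∀ i' i₁ i₂, Delta i' i₂ ≤ Delta i' i₁ + Delta i₁ i₂ := by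
    intro i' i₁ i₂
    have h : ∑ j, (w i' j - w i₂ j) * (if w i' j < w i₂ j then xl j else xu j)
        ≤ ∑ j, ((w i' j - w i₁ j) * (if w i' j < w i₁ j then xl j else xu j)
          + (w i₁ j - w i₂ j) * (if w i₁ j < w i₂ j then xl j else xu j)) :=
      Finset.sum_le_sum fun j _ => t9 (hbounds j) _ _ _
    rw [Finset.sum_add_distrib] at h
    rw [hDelta, hDelta, hDelta]; linarith
  have G7 : ∀ i₁ i₂ j, (mlow i₁ + delta i₁ j) - (mlow i₂ + delta i₂ j) ≤ Delta i₁ i₂ := by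
    intro i₁ i₂ j
    have h : ∑ j'', ((w i₁ j'' * (if w i₁ j'' < 0 then xu j'' else xl j'')
              - w i₂ j'' * (if w i₂ j'' < 0 then xu j'' else xl j''))
            + (if j'' = j then delta i₁ j - delta i₂ j else 0))
        ≤ ∑ j'', (w i₁ j'' - w i₂ j'') * (if w i₁ j'' < w i₂ j'' then xl j'' else xu j'') := by
      refine Finset.sum_le_sum fun j'' _ => ?_
      by_cases hj : j'' = j
      · subst hj
        rw [if_pos rfl, hdelta i₁ j'', hdelta i₂ j'']
        have := t7 (hbounds j'') (w i₁ j'') (w i₂ j''); linarith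
      · rw [if_neg hj]
        have := t6 (hbounds j'') (w i₁ j'') (w i₂ j''); linarith
    rw [Finset.sum_add_distrib, Finset.sum_sub_distrib, Finset.sum_ite_eq' Finset.univ j] at h
    simp only [Finset.mem_univ, if_true] at h
    rw [hDelta, hmlow, hmlow]; linarith
  have G10 : ∀ i' i j, (Mup i' - Mup i) + (delta i j - delta i' j) ≤ Delta i' i := by
    intro i' i j
    have h : ∑ j'', ((w i' j'' * (if w i' j'' < 0 then xl j'' else xu j'')
              - w i j'' * (if w i j'' < 0 then xl j'' else xu j''))
            + (if j'' = j then delta i j - delta i' j else 0))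
        ≤ ∑ j'', (w i' j'' - w i j'') * (if w i' j'' < w i j'' then xl j'' else xu j'') := by
      refine Finset.sum_le_sum fun j'' _ => ?_
      by_cases hj : j'' = j
      · subst hj
        rw [if_pos rfl, hdelta i j'', hdelta i' j'']
        have := t10 (hbounds j'') (w i' j'') (w i j''); linarith
      · rw [if_neg hj]
        have := t5 (hbounds j'') (w i' j'') (w i j''); linarith
    rw [Finset.sum_add_distrib, Finset.sum_sub_distrib, Finset.sum_ite_eq' Finset.univ j] at h
    simp only [Finset.mem_univ, if_true] at h
    rw [hDelta, hMup, hMup]; linarith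
  have G11 : ∀ i' i j, Delta i' i + delta i' j + delta i j
      ≤ (Mup i' - mlow i) + (xu j - xl j) := by
    intro i' i j
    have h : ∑ j'', ((w i' j'' - w i j'') * (if w i' j'' < w i j'' then xl j'' else xu j'')
            + (if j'' = j then delta i' j + delta i j - (xu j - xl j) else 0))
        ≤ ∑ j'', (w i' j'' * (if w i' j'' < 0 then xl j'' else xu j'')
            - w i j'' * (if w i j'' < 0 then xu j'' else xl j'')) := by
      refine Finset.sum_le_sum fun j'' _ => ?_
      by_cases hj : j'' = j
      · subst hj
        rw [if_pos rfl, hdelta i' j'', hdelta i j'']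
        have := t11 (hbounds j'') (w i' j'') (w i j''); linarith
      · rw [if_neg hj]
        have := t4 (hbounds j'') (w i' j'') (w i j''); linarith
    rw [Finset.sum_add_distrib, Finset.sum_sub_distrib, Finset.sum_ite_eq' Finset.univ j] at h
    simp only [Finset.mem_univ, if_true] at h
    rw [hDelta, hMup, hmlow]; linarith
  intro x y
  show _ ↔ Sum.elim x y ∈ tconv (gens xl xu mlow Mup Delta delta)
  constructor
  · rintro ⟨hx, hy, hD, hxy⟩
    refine ⟨fun g => Option.elim g 0 (Sum.elim (fun j => x j - xu j) (fun i => y i - Mup i)),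
      ?_, ⟨none, rfl⟩, ?_⟩
    · rintro (_ | (j | i))
      · simp
      · simp only [Option.elim_some, Sum.elim_inl]; linarith [(hx j).2]
      · simp only [Option.elim_some, Sum.elim_inr]; linarith [(hy i).2]
    · rintro (j | i)
      · constructor
        · refine ⟨some (Sum.inl j), ?_⟩
          simp [gens]
        · rintro z ⟨k, rfl⟩
          rcases k with _ | (j' | i)
          · simp only [Option.elim_none, Sum.elim_inl, gens]
            linarith [(hx j).1]
          · simp only [Option.elim_some, Sum.elim_inl, gens]
            by_cases h : j = j'
            · subst h; simp
            · rw [if_neg h]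
              linarith [(hx j).1, (hx j').2]
          · simp only [Option.elim_some, Sum.elim_inl, Sum.elim_inr, gens]
            linarith [(hxy i j).2]
      · constructor
        · refine ⟨some (Sum.inr i), ?_⟩
          simp [gens]
        · rintro z ⟨k, rfl⟩
          rcases k with _ | (j | i')
          · simp only [Option.elim_none, Sum.elim_inr, gens]
            linarith [(hy i).1]
          · simp only [Option.elim_some, Sum.elim_inl, Sum.elim_inr, gens]
            linarith [(hxy i j).1]
          · simp only [Option.elim_some, Sum.elim_inr, gens]
            by_cases h : i = i'
            · subst h; simp
            · rw [if_neg h]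
              linarith [hD i' i]
  · rintro ⟨lam, hneg, ⟨k0, hk0⟩, hmax⟩
    have hub : ∀ t k, lam k + gens xl xu mlow Mup Delta delta k t ≤ Sum.elim x y t :=
      fun t k => (hmax t).2 ⟨k, rfl⟩
    have hwit : ∀ t, ∃ k, lam k + gens xl xu mlow Mup Delta delta k t = Sum.elim x y t :=
      fun t => (hmax t).1
    -- entrywise bounds on generators
    have E1 : ∀ k j, xl j ≤ gens xl xu mlow Mup Delta delta k (Sum.inl j) := by
      rintro (_ | (j' | i)) j
      · simp [gens]
      · simp only [gens, Option.elim_some, Sum.elim_inl]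
        split_ifs with h
        · subst h; exact hbounds j
        · exact le_rfl
      · simp only [gens, Option.elim_some, Sum.elim_inr, Sum.elim_inl]
        linarith [hd0 i j]
    have E2 : ∀ k j, gens xl xu mlow Mup Delta delta k (Sum.inl j) ≤ xu j := by
      rintro (_ | (j' | i)) j
      · simp only [gens, Option.elim_none, Sum.elim_inl]; exact hbounds j
      · simp only [gens, Option.elim_some, Sum.elim_inl]
        split_ifs with h
        · subst h; exact le_rfl
        · exact hbounds j
      · simp only [gens, Option.elim_some, Sum.elim_inr, Sum.elim_inl]
        linarith [hdle i j]
    have E3 : ∀ k i, mlow i ≤ gens xl xu mlow Mup Delta delta k (Sum.inr i) := by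
      rintro (_ | (j | i')) i
      · simp [gens]
      · simp only [gens, Option.elim_some, Sum.elim_inl, Sum.elim_inr]
        linarith [hd0 i j]
      · simp only [gens, Option.elim_some, Sum.elim_inr]
        split_ifs with h
        · subst h; exact G0 i
        · linarith [G4 i' i]
    have E4 : ∀ k i, gens xl xu mlow Mup Delta delta k (Sum.inr i) ≤ Mup i := by
      rintro (_ | (j | i')) i
      · simp only [gens, Option.elim_none, Sum.elim_inr]; exact G0 i
      · simp only [gens, Option.elim_some, Sum.elim_inl, Sum.elim_inr]
        linarith [G1 i j]
      · simp only [gens, Option.elim_some, Sum.elim_inr]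
        split_ifs with h
        · subst h; exact le_rfl
        · linarith [G5 i' i]
    have E5 : ∀ k i₁ i₂, gens xl xu mlow Mup Delta delta k (Sum.inr i₁)
        - gens xl xu mlow Mup Delta delta k (Sum.inr i₂) ≤ Delta i₁ i₂ := by
      rintro (_ | (j | i')) i₁ i₂
      · simp only [gens, Option.elim_none, Sum.elim_inr]; exact G6 i₁ i₂
      · simp only [gens, Option.elim_some, Sum.elim_inl, Sum.elim_inr]
        exact G7 i₁ i₂ j
      · simp only [gens, Option.elim_some, Sum.elim_inr]
        split_ifs with h1 h2 h2
        · rw [h1, h2]; linarith [GDself i']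
        · rw [h1]; linarith
        · rw [h2]; linarith [G8 i₁ i']
        · linarith [G9 i' i₁ i₂]
    have E6 : ∀ k i j, gens xl xu mlow Mup Delta delta k (Sum.inr i)
        - gens xl xu mlow Mup Delta delta k (Sum.inl j) ≤ Mup i - xl j - delta i j := by
      rintro (_ | (j' | i')) i j
      · simp only [gens, Option.elim_none, Sum.elim_inr, Sum.elim_inl]
        linarith [G1 i j]
      · simp only [gens, Option.elim_some, Sum.elim_inl, Sum.elim_inr]
        split_ifs with h
        · subst h; linarith [G3 i j]
        · linarith [G2 i j j' h]
      · simp only [gens, Option.elim_some, Sum.elim_inr, Sum.elim_inl]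
        split_ifs with h
        · subst h; linarith
        · linarith [G10 i' i j]
    have E7 : ∀ k i j, mlow i - xu j + delta i j ≤ gens xl xu mlow Mup Delta delta k (Sum.inr i)
        - gens xl xu mlow Mup Delta delta k (Sum.inl j) := by
      rintro (_ | (j' | i')) i j
      · simp only [gens, Option.elim_none, Sum.elim_inr, Sum.elim_inl]
        linarith [hdle i j]
      · simp only [gens, Option.elim_some, Sum.elim_inl, Sum.elim_inr]
        split_ifs with h
        · subst h; linarith
        · linarith [hd0 i j', hdle i j]
      · simp only [gens, Option.elim_some, Sum.elim_inr, Sum.elim_inl]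
        split_ifs with h
        · subst h; linarith [G3 i j]
        · linarith [G11 i' i j]
    refine ⟨fun j => ⟨?_, ?_⟩, fun i => ⟨?_, ?_⟩, fun i₁ i₂ => ?_, fun i j => ⟨?_, ?_⟩⟩
    · have h := hub (Sum.inl j) k0
      simp only [Sum.elim_inl] at h
      linarith [E1 k0 j]
    · obtain ⟨k, hk⟩ := hwit (Sum.inl j)
      simp only [Sum.elim_inl] at hk
      linarith [hneg k, E2 k j]
    · have h := hub (Sum.inr i) k0
      simp only [Sum.elim_inr] at h
      linarith [E3 k0 i]
    · obtain ⟨k, hk⟩ := hwit (Sum.inr i)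
      simp only [Sum.elim_inr] at hk
      linarith [hneg k, E4 k i]
    · obtain ⟨k, hk⟩ := hwit (Sum.inr i₁)
      have h2 := hub (Sum.inr i₂) k
      simp only [Sum.elim_inr] at hk h2
      linarith [E5 k i₁ i₂]
    · obtain ⟨k, hk⟩ := hwit (Sum.inl j)
      have h2 := hub (Sum.inr i) k
      simp only [Sum.elim_inl] at hk
      simp only [Sum.elim_inr] at h2
      linarith [E7 k i j]
    · obtain ⟨k, hk⟩ := hwit (Sum.inr i)
      have h2 := hub (Sum.inl j) k
      simp only [Sum.elim_inr] at hk
      simp only [Sum.elim_inl] at h2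
      linarith [E6 k i j]
end

section
/- Let M be the linear subspace of ℝ^{2m+2n} of points (x⁺, y⁺, x⁻, y⁻) with x⁺ + x⁻ = 0 and y⁺ + y⁻ = 0. Then the image of the octagon O_f under the embedding (x,y) ↦ (x, y, −x, −y) equals M ∩ tconv(A, B⁺_1,…,B⁺_m, B⁻_1,…,B⁻_m, C⁺_1,…,C⁺_n, C⁻_1,…,C⁻_n), where: A = (x̲_1,…,x̲_m, m_1,…,m_n, −x̄_1,…,−x̄_m, −M_1,…,−M_n); for k ∈ {1,…,m}, B⁺_k has x⁺_k = x̄_k, x⁺_j = x̲_j (j ≠ k), y⁺_i = m_i + δ_{i,k}, x⁻_j = −x̄_j (all j), y⁻_i = −M_i + γ_{i,k}; B⁻_k has x⁺_j = x̲_j (all j), y⁺_i = m_i + γ_{i,k}, x⁻_k = −x̲_k, x⁻_j = −x̄_j (j ≠ k), y⁻_i = −M_i + δ_{i,k}; for l ∈ {1,…,n}, C⁺_l has x⁺_j = x̲_j + δ_{l,j}, y⁺_l = M_l, y⁺_i = M_l − Δ_{l,i} (i ≠ l), x⁻_j = −x̄_j + γ_{l,j}, y⁻_l = −M_l, y⁻_i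 = M_l − Γ_{l,i} (i ≠ l); C⁻_l has x⁺_j = x̲_j + γ_{l,j}, y⁺_l = m_l, y⁺_i = −m_l + L_{l,i} (i ≠ l), x⁻_j = −x̄_j + δ_{l,j}, y⁻_l = −m_l, y⁻_i = −m_l − Δ_{i,l} (i ≠ l). -/
/-- The `1 + 2m + 2n` generators `A, B⁺_k, B⁻_k, C⁺_l, C⁻_l` in `ℝ^(2m+2n)`. -/
noncomputable def octGens (m n : ℕ) (xl xu : Fin m → ℝ) (mlow Mup : Fin n → ℝ)
    (Delta Gam Lo : Fin n → Fin n → ℝ) (delta gam : Fin n → Fin m → ℝ) :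
    Option ((Fin m ⊕ Fin m) ⊕ (Fin n ⊕ Fin n)) →
      ((Fin m ⊕ Fin n) ⊕ (Fin m ⊕ Fin n)) → ℝ
  | none =>
      Sum.elim (Sum.elim xl mlow) (Sum.elim (fun j => -xu j) (fun i => -Mup i))
  | some (Sum.inl (Sum.inl k)) =>
      Sum.elim
        (Sum.elim (fun j => if j = k then xu k else xl j) (fun i => mlow i + delta i k))
        (Sum.elim (fun j => -xu j) (fun i => -Mup i + gam i k))
  | some (Sum.inl (Sum.inr k)) =>
      Sum.elim
        (Sum.elim xl (fun i => mlow i + gam i k))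
        (Sum.elim (fun j => if j = k then -xl k else -xu j) (fun i => -Mup i + delta i k))
  | some (Sum.inr (Sum.inl l)) =>
      Sum.elim
        (Sum.elim (fun j => xl j + delta l j)
          (fun i => if i = l then Mup l else Mup l - Delta l i))
        (Sum.elim (fun j => -xu j + gam l j)
          (fun i => if i = l then -Mup l else Mup l - Gam l i))
  | some (Sum.inr (Sum.inr l)) =>
      Sum.elim
        (Sum.elim (fun j => xl j + gam l j)
          (fun i => if i = l then mlow l else -mlow l + Lo l i))
        (Sum.elim (fun j => -xu j + delta l j)
          (fun i => if i = l then -mlow l else -mlow l - Delta i l))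

/-!
Every bound of the octagon is the maximum over the box of a difference `φ_s - φ_t` of two
coordinates of the lift `φ x = (x, f x, -x, -f x)`, extended by a homogenizing coordinate `φ_0 = 0`.
Since `φ` is affine, this maximum splits into one maximum per coordinate `x_j`, so the bound
matrix `c` obeys the triangle inequality `c s u ≤ c s t + c t u` and has zero diagonal. On `M` the
octagon is therefore the polytrope `{z : z_s - z_t ≤ c s t}`, and such a polytrope is the tropical
convex hull of the columns `c s 0 - c s ·` of its (Kleene-closed) bound matrix: every column lies in
it by the triangle inequality, and a point `z` is the tropical combination with coefficients
`z_s - c s 0`. These columns are exactly `A`, `B⁺_k`, `B⁻_k`, `C⁺_l`, `C⁻_l`.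
-/

theorem tconv_comp_equiv {d ι κ : Type*} [Fintype ι] [Fintype κ] (v : ι → d → ℝ) (e : κ ≃ ι) :
    tconv (v ∘ e) = tconv v := by
  ext x
  constructor
  · rintro ⟨lam, hlam, ⟨k, hk⟩, hx⟩
    refine ⟨lam ∘ e.symm, fun i => hlam _, ⟨e k, by simpa using hk⟩, fun t => ?_⟩
    convert hx t using 1
    rw [← e.symm.surjective.range_comp]
    simp [Function.comp_def]
  · rintro ⟨lam, hlam, ⟨i, hi⟩, hx⟩
    refine ⟨lam ∘ e, fun k => hlam _, ⟨e.symm i, by simpa using hi⟩, fun t => ?_⟩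
    convert hx t using 1
    exact e.surjective.range_comp fun i => lam i + v i t

section Polytrope

variable {N : Type*}

/-- The coordinate `none` is a homogenizing coordinate, on which every point vanishes. -/
def polytrope (c : Option N → Option N → ℝ) : Set (N → ℝ) :=
  {z | ∀ s t, s.elim 0 z - t.elim 0 z ≤ c s t}

def kleeneGens (c : Option N → Option N → ℝ) : Option N → N → ℝ :=
  fun s t => c s none - c s (some t)

variable [Fintype N] {c : Option N → Option N → ℝ}

theorem polytrope_subset_tconv (hc : ∀ s, c s s = 0) : polytrope c ⊆ tconv (kleeneGens c) := by
  intro z hz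
  refine ⟨fun s => s.elim 0 z - c s none, fun s => by simpa using hz s none,
    ⟨none, by simp [hc]⟩, fun t => ⟨⟨some t, by simp [kleeneGens, hc]⟩, ?_⟩⟩
  rintro _ ⟨s, rfl⟩
  have := hz s (some t)
  simp only [kleeneGens, Option.elim_some] at this ⊢
  linarith

theorem tconv_subset_polytrope (htri : ∀ s t u, c s u ≤ c s t + c t u) :
    tconv (kleeneGens c) ⊆ polytrope c := by
  rintro z ⟨lam, hlam, ⟨k₀, hk₀⟩, hz⟩
  have hmax : ∀ u, IsGreatest (Set.range fun k => lam k + (c k none - c k u)) (u.elim 0 z) := by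
    rintro (_ | t)
    · refine ⟨⟨k₀, by simp [hk₀]⟩, ?_⟩
      rintro _ ⟨k, rfl⟩
      simpa using hlam k
    · exact hz t
  intro s t
  obtain ⟨k, hk⟩ := (hmax s).1
  have hkt := (hmax t).2 ⟨k, rfl⟩
  have := htri k s t
  simp only at hk hkt
  linarith

theorem polytrope_eq_tconv (hc : ∀ s, c s s = 0) (htri : ∀ s t u, c s u ≤ c s t + c t u) :
    polytrope c = tconv (kleeneGens c) :=
  (polytrope_subset_tconv hc).antisymm (tconv_subset_polytrope htri)

end Polytrope

section BoxBound

/-- For `l ≤ u`, `maxMul a l u` and `minMul a l u` are the maximum and minimum of `a * x` over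
`x ∈ [l, u]`. -/
noncomputable def maxMul (a l u : ℝ) : ℝ := a * if a < 0 then l else u

noncomputable def minMul (a l u : ℝ) : ℝ := a * if a < 0 then u else l

noncomputable def deltaCoef (a l u : ℝ) : ℝ :=
  if a ≤ 0 then 0 else if a ≤ 1 then a * (u - l) else u - l

noncomputable def gammaCoef (a l u : ℝ) : ℝ :=
  if 0 ≤ a then 0 else if (-1 : ℝ) ≤ a then -a * (u - l) else u - l

variable {a a' l u : ℝ}

theorem maxMul_of_nonneg (h : 0 ≤ a) : maxMul a l u = a * u := by
  simp [maxMul, not_lt.2 h]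

theorem maxMul_of_neg (h : a < 0) : maxMul a l u = a * l := by
  simp [maxMul, h]

@[simp] theorem maxMul_zero : maxMul 0 l u = 0 := by simp [maxMul]

theorem maxMul_neg : maxMul (-a) l u = -minMul a l u := by
  unfold maxMul minMul; split_ifs <;> first | ring1 | (obtain rfl : a = 0 := by linarith); ring1

theorem maxMul_add_le (h : l ≤ u) : maxMul (a + a') l u ≤ maxMul a l u + maxMul a' l u := by
  unfold maxMul; split_ifs <;> nlinarith

theorem maxMul_add_self : maxMul (a + a) l u = 2 * maxMul a l u := by
  unfold maxMul; split_ifs <;> first | ring1 | (exfalso; linarith)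

theorem minMul_add_self : minMul (a + a) l u = 2 * minMul a l u := by
  unfold minMul; split_ifs <;> first | ring1 | (exfalso; linarith)

theorem maxMul_sub_one : maxMul (a - 1) l u = maxMul a l u - l - deltaCoef a l u := by
  unfold maxMul deltaCoef; split_ifs <;> first
    | ring1 | (exfalso; linarith)
    | (obtain rfl : a = 0 := by linarith); ring1 | (obtain rfl : a = 1 := by linarith); ring1

theorem maxMul_neg_add_one : maxMul (-a + 1) l u = maxMul (-a) l u + u - deltaCoef a l u := by
  unfold maxMul deltaCoef; split_ifs <;> first | ring1 | (exfalso; linarith)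

theorem maxMul_add_one : maxMul (a + 1) l u = maxMul a l u + u - gammaCoef a l u := by
  unfold maxMul gammaCoef; split_ifs <;> first | ring1 | (exfalso; linarith)

theorem maxMul_neg_sub_one : maxMul (-a - 1) l u = maxMul (-a) l u - l - gammaCoef a l u := by
  unfold maxMul gammaCoef; split_ifs <;> first
    | ring1 | (exfalso; linarith)
    | (obtain rfl : a = 0 := by linarith); ring1 | (obtain rfl : a = -1 := by linarith); ring1

variable {ι : Type*} [Fintype ι] (xl xu : ι → ℝ)

noncomputable def boxMax (a : ι → ℝ) : ℝ := ∑ j, maxMul (a j) (xl j) (xu j)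

@[simp] theorem boxMax_zero : boxMax xl xu 0 = 0 := by simp [boxMax]

theorem boxMax_neg (a : ι → ℝ) : boxMax xl xu (-a) = -∑ j, minMul (a j) (xl j) (xu j) := by
  simp [boxMax, maxMul_neg]

theorem boxMax_add_le (h : ∀ j, xl j ≤ xu j) (a a' : ι → ℝ) :
    boxMax xl xu (a + a') ≤ boxMax xl xu a + boxMax xl xu a' := by
  rw [boxMax, boxMax, boxMax, ← Finset.sum_add_distrib]
  exact Finset.sum_le_sum fun j _ => maxMul_add_le (h j)

theorem boxMax_add_single [DecidableEq ι] (a : ι → ℝ) (k : ι) (c : ℝ) :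
    boxMax xl xu (a + Pi.single k c) =
      boxMax xl xu a + (maxMul (a k + c) (xl k) (xu k) - maxMul (a k) (xl k) (xu k)) := by
  have hterm : ∀ j,
      maxMul ((a + Pi.single k c : ι → ℝ) j) (xl j) (xu j) - maxMul (a j) (xl j) (xu j) =
        (Pi.single k (maxMul (a k + c) (xl k) (xu k) - maxMul (a k) (xl k) (xu k)) : ι → ℝ) j := by
    intro j
    rcases eq_or_ne j k with rfl | hjk <;> simp [*]
  rw [← sub_eq_iff_eq_add', boxMax, boxMax, ← Finset.sum_sub_distrib]
  simp only [hterm, Finset.sum_pi_single', Finset.mem_univ, if_true]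

theorem boxMax_single [DecidableEq ι] (k : ι) (c : ℝ) :
    boxMax xl xu (Pi.single k c) = maxMul c (xl k) (xu k) := by
  simpa using boxMax_add_single xl xu 0 k c

/-- `affineBound xl xu A B s t` is the maximum over the box `∏ j, [xl j, xu j]` of `φ s - φ t`,
where `φ s x = ∑ j, A s j * x j + B s`. -/
noncomputable def affineBound {κ : Type*} (A : κ → ι → ℝ) (B : κ → ℝ) (s t : κ) : ℝ :=
  B s - B t + boxMax xl xu (A s - A t)

variable {κ : Type*} (A : κ → ι → ℝ) (B : κ → ℝ)

theorem affineBound_self (s : κ) : affineBound xl xu A B s s = 0 := by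
  simp [affineBound]

theorem affineBound_triangle (h : ∀ j, xl j ≤ xu j) (s t r : κ) :
    affineBound xl xu A B s r ≤ affineBound xl xu A B s t + affineBound xl xu A B t r := by
  have := boxMax_add_le xl xu h (A s - A t) (A t - A r)
  simp only [affineBound, sub_add_sub_cancel] at this ⊢
  linarith

end BoxBound

@[simp] def liftSigned {P G : Type*} [Zero G] [Neg G] (f : P → G) : Option (P ⊕ P) → G
  | none => 0
  | some (.inl q) => f q
  | some (.inr q) => -f q

theorem affineBound_liftSigned_swap {ι P : Type*} [Fintype ι] (xl xu : ι → ℝ) (W : P → ι → ℝ)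
    (β : P → ℝ) (s t : Option (P ⊕ P)) :
    affineBound xl xu (liftSigned W) (liftSigned β) (s.map Sum.swap) (t.map Sum.swap) =
      affineBound xl xu (liftSigned W) (liftSigned β) t s := by
  rcases s with _ | q | q <;> rcases t with _ | r | r <;>
    simp only [affineBound, liftSigned, Option.map_none, Option.map_some, Sum.swap_inl,
      Sum.swap_inr] <;> ring_nf

namespace Octagon

variable {m n : ℕ} (w : Fin n → Fin m → ℝ) (b : Fin n → ℝ) (xl xu : Fin m → ℝ)

/-! `lower`, `upper`, `diffUpper`, `sumUpper`, `sumLower`, `delta`, `gamma` are the paper's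
`m`, `M`, `Δ`, `Γ`, `L`, `δ`, `γ`. -/

noncomputable def lower (i : Fin n) : ℝ := b i + ∑ j, minMul (w i j) (xl j) (xu j)

noncomputable def upper (i : Fin n) : ℝ := b i + ∑ j, maxMul (w i j) (xl j) (xu j)

noncomputable def diffUpper (i₁ i₂ : Fin n) : ℝ :=
  (b i₁ - b i₂) + ∑ j, (w i₁ j - w i₂ j) * (if w i₁ j < w i₂ j then xl j else xu j)

noncomputable def sumUpper (i₁ i₂ : Fin n) : ℝ :=
  (b i₁ + b i₂) + ∑ j, maxMul (w i₁ j + w i₂ j) (xl j) (xu j)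

noncomputable def sumLower (i₁ i₂ : Fin n) : ℝ :=
  (b i₁ + b i₂) + ∑ j, minMul (w i₁ j + w i₂ j) (xl j) (xu j)

noncomputable def delta (i : Fin n) (j : Fin m) : ℝ := deltaCoef (w i j) (xl j) (xu j)

noncomputable def gamma (i : Fin n) (j : Fin m) : ℝ := gammaCoef (w i j) (xl j) (xu j)

def MemOctagon (x : Fin m → ℝ) (y : Fin n → ℝ) : Prop :=
  (∀ j, xl j ≤ x j ∧ x j ≤ xu j) ∧
  (∀ i, lower w b xl xu i ≤ y i ∧ y i ≤ upper w b xl xu i) ∧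
  (∀ i₁ i₂, y i₁ - y i₂ ≤ diffUpper w b xl xu i₁ i₂) ∧
  (∀ i j, lower w b xl xu i - xu j + delta w xl xu i j ≤ y i - x j ∧
    y i - x j ≤ upper w b xl xu i - xl j - delta w xl xu i j) ∧
  (∀ i₁ i₂, sumLower w b xl xu i₁ i₂ ≤ y i₁ + y i₂ ∧ y i₁ + y i₂ ≤ sumUpper w b xl xu i₁ i₂) ∧
  (∀ i j, lower w b xl xu i + xl j + gamma w xl xu i j ≤ y i + x j ∧
    y i + x j ≤ upper w b xl xu i + xu j - gamma w xl xu i j)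

/-- `bound s t` is the maximum of `z s - z t` over the lifts `z = (x, y, -x, -y)`, `y = w x + b`,
of the points `x` of the box, with `z none = 0`. -/
noncomputable def bound :
    Option ((Fin m ⊕ Fin n) ⊕ (Fin m ⊕ Fin n)) → Option ((Fin m ⊕ Fin n) ⊕ (Fin m ⊕ Fin n)) → ℝ :=
  affineBound xl xu (liftSigned (Sum.elim (fun j => Pi.single j 1) w)) (liftSigned (Sum.elim 0 b))

theorem bound_swap (s t) :
    bound w b xl xu (s.map Sum.swap) (t.map Sum.swap) = bound w b xl xu t s :=
  affineBound_liftSigned_swap ..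

variable {w b xl xu}

theorem upper_eq (i : Fin n) : upper w b xl xu i = b i + boxMax xl xu (w i) := rfl

theorem lower_eq (i : Fin n) : lower w b xl xu i = b i - boxMax xl xu (-w i) := by
  simp [lower, boxMax_neg]

@[simp] theorem bound_self (s) : bound w b xl xu s s = 0 := affineBound_self ..

/-! In the names below `xPos j`, `yPos i`, `xNeg j`, `yNeg i` stand for the coordinates
`some (.inl (.inl j))`, `some (.inl (.inr i))`, `some (.inr (.inl j))`, `some (.inr (.inr i))`,
that is `x⁺_j`, `y⁺_i`, `x⁻_j`, `y⁻_i`. -/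

section Entries

variable (i i' : Fin n) (j j' : Fin m)

@[simp] theorem bound_xPos_none : bound w b xl xu (some (.inl (.inl j))) none = xu j := by
  simp [bound, affineBound, boxMax_single, maxMul_of_nonneg]

@[simp] theorem bound_none_xPos : bound w b xl xu none (some (.inl (.inl j))) = -xl j := by
  simp [bound, affineBound, ← Pi.single_neg, boxMax_single, maxMul_of_neg]

@[simp] theorem bound_yPos_none :
    bound w b xl xu (some (.inl (.inr i))) none = upper w b xl xu i := by
  simp [bound, affineBound, upper_eq]

@[simp] theorem bound_none_yPos :
    bound w b xl xu none (some (.inl (.inr i))) = -lower w b xl xu i := by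
  simp [bound, affineBound, lower_eq, neg_add_eq_sub]

@[simp] theorem bound_yPos_xPos :
    bound w b xl xu (some (.inl (.inr i))) (some (.inl (.inl j))) =
      upper w b xl xu i - xl j - delta w xl xu i j := by
  simp only [bound, affineBound, liftSigned, Sum.elim_inl, Sum.elim_inr, Pi.zero_apply]
  rw [sub_eq_add_neg (w i), ← Pi.single_neg, boxMax_add_single, ← sub_eq_add_neg,
    maxMul_sub_one, upper_eq, delta]
  ring

@[simp] theorem bound_xPos_xPos :
    bound w b xl xu (some (.inl (.inl j))) (some (.inl (.inl j'))) =
      if j = j' then 0 else xu j - xl j' := by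
  simp only [bound, affineBound, liftSigned, Sum.elim_inl, Pi.zero_apply, sub_zero, zero_add]
  rw [sub_eq_add_neg, ← Pi.single_neg, boxMax_add_single, boxMax_single]
  rcases eq_or_ne j j' with rfl | h
  · simp [maxMul_of_nonneg]
  · simp [h, h.symm, maxMul_of_nonneg, maxMul_of_neg, sub_eq_add_neg]

@[simp] theorem bound_xPos_yPos :
    bound w b xl xu (some (.inl (.inl j))) (some (.inl (.inr i))) =
      xu j - lower w b xl xu i - delta w xl xu i j := by
  simp only [bound, affineBound, liftSigned, Sum.elim_inl, Sum.elim_inr, Pi.zero_apply]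
  rw [← neg_add_eq_sub (w i), boxMax_add_single, Pi.neg_apply, maxMul_neg_add_one, lower_eq,
    delta]
  ring

@[simp] theorem bound_xPos_xNeg :
    bound w b xl xu (some (.inl (.inl j))) (some (.inr (.inl j'))) = xu j + xu j' := by
  simp only [bound, affineBound, liftSigned, Sum.elim_inl, Pi.zero_apply, neg_zero, sub_zero,
    zero_add, sub_neg_eq_add]
  rw [boxMax_add_single, boxMax_single]
  rcases eq_or_ne j j' with rfl | h
  · norm_num [maxMul_of_nonneg]; ring
  · simp [h.symm, maxMul_of_nonneg]

@[simp] theorem bound_yPos_yPos :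
    bound w b xl xu (some (.inl (.inr i))) (some (.inl (.inr i'))) = diffUpper w b xl xu i i' := by
  simp [bound, affineBound, diffUpper, boxMax, maxMul, sub_neg]

@[simp] theorem bound_yPos_xNeg :
    bound w b xl xu (some (.inl (.inr i))) (some (.inr (.inl j))) =
      upper w b xl xu i + xu j - gamma w xl xu i j := by
  simp only [bound, affineBound, liftSigned, Sum.elim_inl, Sum.elim_inr, Pi.zero_apply, neg_zero,
    sub_zero, sub_neg_eq_add]
  rw [boxMax_add_single, maxMul_add_one, upper_eq, gamma]
  ring

@[simp] theorem bound_yPos_yNeg :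
    bound w b xl xu (some (.inl (.inr i))) (some (.inr (.inr i'))) = sumUpper w b xl xu i i' := by
  simp [bound, affineBound, sumUpper, boxMax]

@[simp] theorem bound_xNeg_xPos :
    bound w b xl xu (some (.inr (.inl j))) (some (.inl (.inl j'))) = -xl j - xl j' := by
  simp only [bound, affineBound, liftSigned, Sum.elim_inl, Pi.zero_apply, neg_zero, sub_zero]
  rw [sub_eq_add_neg, ← Pi.single_neg, ← Pi.single_neg, boxMax_add_single, boxMax_single]
  rcases eq_or_ne j j' with rfl | h
  · norm_num [maxMul_of_neg]; ring
  · simp [h.symm, maxMul_of_neg]; ring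

@[simp] theorem bound_yNeg_xPos :
    bound w b xl xu (some (.inr (.inr i))) (some (.inl (.inl j))) =
      -lower w b xl xu i - xl j - gamma w xl xu i j := by
  simp only [bound, affineBound, liftSigned, Sum.elim_inl, Sum.elim_inr, Pi.zero_apply]
  rw [sub_eq_add_neg (-w i), ← Pi.single_neg, boxMax_add_single, ← sub_eq_add_neg, Pi.neg_apply,
    maxMul_neg_sub_one, lower_eq, gamma]
  ring

@[simp] theorem bound_yNeg_yPos :
    bound w b xl xu (some (.inr (.inr i))) (some (.inl (.inr i'))) = -sumLower w b xl xu i i' := by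
  simp only [bound, affineBound, liftSigned, Sum.elim_inr, ← neg_add', boxMax_neg, sumLower]
  simp; ring

@[simp] theorem bound_xNeg_none : bound w b xl xu (some (.inr (.inl j))) none = -xl j :=
  (bound_swap w b xl xu (some (.inl (.inl j))) none).trans (bound_none_xPos j)

@[simp] theorem bound_yNeg_none :
    bound w b xl xu (some (.inr (.inr i))) none = -lower w b xl xu i :=
  (bound_swap w b xl xu (some (.inl (.inr i))) none).trans (bound_none_yPos i)

@[simp] theorem bound_none_xNeg : bound w b xl xu none (some (.inr (.inl j))) = xu j :=
  (bound_swap w b xl xu none (some (.inl (.inl j)))).trans (bound_xPos_none j)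

@[simp] theorem bound_none_yNeg :
    bound w b xl xu none (some (.inr (.inr i))) = upper w b xl xu i :=
  (bound_swap w b xl xu none (some (.inl (.inr i)))).trans (bound_yPos_none i)

@[simp] theorem bound_xPos_yNeg :
    bound w b xl xu (some (.inl (.inl j))) (some (.inr (.inr i))) =
      upper w b xl xu i + xu j - gamma w xl xu i j :=
  (bound_swap w b xl xu (some (.inr (.inl j))) (some (.inl (.inr i)))).trans (bound_yPos_xNeg i j)

@[simp] theorem bound_xNeg_yPos :
    bound w b xl xu (some (.inr (.inl j))) (some (.inl (.inr i))) =
      -lower w b xl xu i - xl j - gamma w xl xu i j :=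
  (bound_swap w b xl xu (some (.inl (.inl j))) (some (.inr (.inr i)))).trans (bound_yNeg_xPos i j)

@[simp] theorem bound_xNeg_xNeg :
    bound w b xl xu (some (.inr (.inl j))) (some (.inr (.inl j'))) =
      if j' = j then 0 else xu j' - xl j :=
  (bound_swap w b xl xu (some (.inl (.inl j))) (some (.inl (.inl j')))).trans
    (bound_xPos_xPos j' j)

@[simp] theorem bound_xNeg_yNeg :
    bound w b xl xu (some (.inr (.inl j))) (some (.inr (.inr i))) =
      upper w b xl xu i - xl j - delta w xl xu i j :=
  (bound_swap w b xl xu (some (.inl (.inl j))) (some (.inl (.inr i)))).trans (bound_yPos_xPos i j)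

@[simp] theorem bound_yNeg_xNeg :
    bound w b xl xu (some (.inr (.inr i))) (some (.inr (.inl j))) =
      xu j - lower w b xl xu i - delta w xl xu i j :=
  (bound_swap w b xl xu (some (.inl (.inr i))) (some (.inl (.inl j)))).trans (bound_xPos_yPos i j)

@[simp] theorem bound_yNeg_yNeg :
    bound w b xl xu (some (.inr (.inr i))) (some (.inr (.inr i'))) = diffUpper w b xl xu i' i :=
  (bound_swap w b xl xu (some (.inl (.inr i))) (some (.inl (.inr i')))).trans
    (bound_yPos_yPos i' i)

end Entries

theorem diffUpper_self (i : Fin n) : diffUpper w b xl xu i i = 0 := by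
  rw [← bound_yPos_yPos, bound_self]

theorem sumUpper_self (i : Fin n) : sumUpper w b xl xu i i = 2 * upper w b xl xu i := by
  simp only [sumUpper, upper, maxMul_add_self, ← Finset.mul_sum]; ring

theorem sumLower_self (i : Fin n) : sumLower w b xl xu i i = 2 * lower w b xl xu i := by
  simp only [sumLower, lower, minMul_add_self, ← Finset.mul_sum]; ring

theorem octGens_eq_kleeneGens :
    octGens m n xl xu (lower w b xl xu) (upper w b xl xu) (diffUpper w b xl xu)
        (sumUpper w b xl xu) (sumLower w b xl xu) (delta w xl xu) (gamma w xl xu) =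
      kleeneGens (bound w b xl xu) ∘ Equiv.optionCongr (Equiv.sumSumSumComm _ _ _ _) := by
  funext k t
  rcases k with _ | ((k | k) | (l | l)) <;> rcases t with (j | i) | (j | i) <;>
    simp [octGens, kleeneGens]
  all_goals first
    | ring1
    | (rintro rfl; simp only [diffUpper_self, sumUpper_self, sumLower_self]; ring1)
    | (split_ifs <;> subst_vars <;> first | ring1 | contradiction)

theorem memOctagon_of_lift_mem_polytrope {x : Fin m → ℝ} {y : Fin n → ℝ}
    (h : Sum.elim (Sum.elim x y) (Sum.elim (fun j => -x j) (fun i => -y i)) ∈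
      polytrope (bound w b xl xu)) : MemOctagon w b xl xu x y := by
  refine ⟨fun j => ⟨?_, ?_⟩, fun i => ⟨?_, ?_⟩, fun i₁ i₂ => ?_, fun i j => ⟨?_, ?_⟩,
    fun i₁ i₂ => ⟨?_, ?_⟩, fun i j => ⟨?_, ?_⟩⟩
  · simpa using h none (some (.inl (.inl j)))
  · simpa using h (some (.inl (.inl j))) none
  · simpa using h none (some (.inl (.inr i)))
  · simpa using h (some (.inl (.inr i))) none
  · simpa using h (some (.inl (.inr i₁))) (some (.inl (.inr i₂)))
  · have := h (some (.inl (.inl j))) (some (.inl (.inr i))); simp at this; linarith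
  · simpa using h (some (.inl (.inr i))) (some (.inl (.inl j)))
  · have := h (some (.inr (.inr i₁))) (some (.inl (.inr i₂))); simp at this; linarith
  · simpa using h (some (.inl (.inr i₁))) (some (.inr (.inr i₂)))
  · have := h (some (.inr (.inr i))) (some (.inl (.inl j))); simp at this; linarith
  · simpa using h (some (.inl (.inr i))) (some (.inr (.inl j)))

theorem lift_mem_polytrope_of_memOctagon {x : Fin m → ℝ} {y : Fin n → ℝ}
    (h : MemOctagon w b xl xu x y) :
    Sum.elim (Sum.elim x y) (Sum.elim (fun j => -x j) (fun i => -y i)) ∈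
      polytrope (bound w b xl xu) := by
  obtain ⟨hx, hy, hyy, hyx, hsum, hsumx⟩ := h
  rintro (_ | (j | i) | (j | i)) (_ | (j' | i') | (j' | i')) <;> simp
  · exact (hx j').1
  · exact (hy i').1
  · exact (hx j').2
  · exact (hy i').2
  · exact (hx j).2
  · split_ifs with hjj
    · simp [hjj]
    · linarith [hx j, hx j']
  · linarith [(hyx i' j).1]
  · linarith [hx j, hx j']
  · linarith [(hsumx i' j).2]
  · exact (hy i).2
  · linarith [(hyx i j').2]
  · linarith [hyy i i']
  · exact (hsumx i j').2
  · exact (hsum i i').2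
  · exact (hx j).1
  · linarith [hx j, hx j']
  · linarith [(hsumx i' j).1]
  · split_ifs with hjj
    · simp [hjj]
    · linarith [hx j, hx j']
  · linarith [(hyx i' j).2]
  · exact (hy i).1
  · linarith [(hsumx i j').1]
  · linarith [(hsum i i').1]
  · linarith [(hyx i j').1]
  · linarith [hyy i' i]

end Octagon

theorem octagon_eq_manifold_inter_tropical_general (m n : ℕ)
    (w : Fin n → Fin m → ℝ) (b : Fin n → ℝ)
    (xl xu : Fin m → ℝ) (hbounds : ∀ j, xl j ≤ xu j)
    (mlow Mup : Fin n → ℝ)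
    (hmlow : ∀ i, mlow i = b i + ∑ j, w i j * (if w i j < 0 then xu j else xl j))
    (hMup : ∀ i, Mup i = b i + ∑ j, w i j * (if w i j < 0 then xl j else xu j))
    (Delta : Fin n → Fin n → ℝ) (delta : Fin n → Fin m → ℝ)
    (hDelta : ∀ i₁ i₂, Delta i₁ i₂ = (b i₁ - b i₂) +
        ∑ j, (w i₁ j - w i₂ j) * (if w i₁ j < w i₂ j then xl j else xu j))
    (hdelta : ∀ i j, delta i j = if w i j ≤ 0 then 0
        else if w i j ≤ 1 then w i j * (xu j - xl j) else xu j - xl j)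
    (Gam Lo : Fin n → Fin n → ℝ) (gam : Fin n → Fin m → ℝ)
    (hGam : ∀ i₁ i₂, Gam i₁ i₂ = (b i₁ + b i₂) +
        ∑ j, (w i₁ j + w i₂ j) * (if w i₁ j + w i₂ j < 0 then xl j else xu j))
    (hLo : ∀ i₁ i₂, Lo i₁ i₂ = (b i₁ + b i₂) +
        ∑ j, (w i₁ j + w i₂ j) * (if w i₁ j + w i₂ j < 0 then xu j else xl j))
    (hgam : ∀ i j, gam i j = if 0 ≤ w i j then 0
        else if (-1 : ℝ) ≤ w i j then -(w i j) * (xu j - xl j) else xu j - xl j) :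
    {z : ((Fin m ⊕ Fin n) ⊕ (Fin m ⊕ Fin n)) → ℝ |
        ∃ (x : Fin m → ℝ) (y : Fin n → ℝ),
          ((∀ j, xl j ≤ x j ∧ x j ≤ xu j) ∧
        (∀ i, mlow i ≤ y i ∧ y i ≤ Mup i) ∧
        (∀ i₁ i₂, y i₁ - y i₂ ≤ Delta i₁ i₂) ∧
        (∀ i j, mlow i - xu j + delta i j ≤ y i - x j ∧
          y i - x j ≤ Mup i - xl j - delta i j) ∧
        (∀ i₁ i₂, Lo i₁ i₂ ≤ y i₁ + y i₂ ∧ y i₁ + y i₂ ≤ Gam i₁ i₂) ∧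
        (∀ i j, mlow i + xl j + gam i j ≤ y i + x j ∧
          y i + x j ≤ Mup i + xu j - gam i j)) ∧
          z = Sum.elim (Sum.elim x y) (Sum.elim (fun j => -x j) (fun i => -y i))}
      = {z : ((Fin m ⊕ Fin n) ⊕ (Fin m ⊕ Fin n)) → ℝ |
            ∀ t : Fin m ⊕ Fin n, z (Sum.inl t) + z (Sum.inr t) = 0}
        ∩ tconv (octGens m n xl xu mlow Mup Delta Gam Lo delta gam) := by
  obtain rfl : mlow = Octagon.lower w b xl xu := funext hmlow
  obtain rfl : Mup = Octagon.upper w b xl xu := funext hMup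
  obtain rfl : Delta = Octagon.diffUpper w b xl xu := funext₂ hDelta
  obtain rfl : delta = Octagon.delta w xl xu := funext₂ hdelta
  obtain rfl : Gam = Octagon.sumUpper w b xl xu := funext₂ hGam
  obtain rfl : Lo = Octagon.sumLower w b xl xu := funext₂ hLo
  obtain rfl : gam = Octagon.gamma w xl xu := funext₂ hgam
  rw [Octagon.octGens_eq_kleeneGens, tconv_comp_equiv,
    ← polytrope_eq_tconv Octagon.bound_self (affineBound_triangle _ _ _ _ hbounds)]
  ext z
  constructor
  · rintro ⟨x, y, hxy, rfl⟩
    exact ⟨fun t => by rcases t with j | i <;> simp, Octagon.lift_mem_polytrope_of_memOctagon hxy⟩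
  · rintro ⟨hz, hpoly⟩
    have hlift : z = Sum.elim (Sum.elim (fun j => z (.inl (.inl j))) (fun i => z (.inl (.inr i))))
        (Sum.elim (fun j => -z (.inl (.inl j))) (fun i => -z (.inl (.inr i)))) := by
      funext t
      rcases t with (j | i) | (j | i)
      · rfl
      · rfl
      · exact eq_neg_of_add_eq_zero_right (hz (.inl j))
      · exact eq_neg_of_add_eq_zero_right (hz (.inr i))
    exact ⟨_, _, Octagon.memOctagon_of_lift_mem_polytrope (hlift ▸ hpoly), hlift⟩

theorem octagon_eq_manifold_inter_tropical (m n : ℕ) (hm : 1 ≤ m) (hn : 1 ≤ n)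
    (w : Fin n → Fin m → ℝ) (b : Fin n → ℝ)
    (xl xu : Fin m → ℝ) (hbounds : ∀ j, xl j ≤ xu j)
    (mlow Mup : Fin n → ℝ)
    (hmlow : ∀ i, mlow i = b i + ∑ j, w i j * (if w i j < 0 then xu j else xl j))
    (hMup : ∀ i, Mup i = b i + ∑ j, w i j * (if w i j < 0 then xl j else xu j))
    (Delta : Fin n → Fin n → ℝ) (delta : Fin n → Fin m → ℝ)
    (hDelta : ∀ i₁ i₂, Delta i₁ i₂ = (b i₁ - b i₂) +
        ∑ j, (w i₁ j - w i₂ j) * (if w i₁ j < w i₂ j then xl j else xu j))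
    (hdelta : ∀ i j, delta i j = if w i j ≤ 0 then 0
        else if w i j ≤ 1 then w i j * (xu j - xl j) else xu j - xl j)
    (Gam Lo : Fin n → Fin n → ℝ) (gam : Fin n → Fin m → ℝ)
    (hGam : ∀ i₁ i₂, Gam i₁ i₂ = (b i₁ + b i₂) +
        ∑ j, (w i₁ j + w i₂ j) * (if w i₁ j + w i₂ j < 0 then xl j else xu j))
    (hLo : ∀ i₁ i₂, Lo i₁ i₂ = (b i₁ + b i₂) +
        ∑ j, (w i₁ j + w i₂ j) * (if w i₁ j + w i₂ j < 0 then xu j else xl j))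
    (hgam : ∀ i j, gam i j = if 0 ≤ w i j then 0
        else if (-1 : ℝ) ≤ w i j then -(w i j) * (xu j - xl j) else xu j - xl j) :
    {z : ((Fin m ⊕ Fin n) ⊕ (Fin m ⊕ Fin n)) → ℝ |
        ∃ (x : Fin m → ℝ) (y : Fin n → ℝ),
          ((∀ j, xl j ≤ x j ∧ x j ≤ xu j) ∧
        (∀ i, mlow i ≤ y i ∧ y i ≤ Mup i) ∧
        (∀ i₁ i₂, y i₁ - y i₂ ≤ Delta i₁ i₂) ∧
        (∀ i j, mlow i - xu j + delta i j ≤ y i - x j ∧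
          y i - x j ≤ Mup i - xl j - delta i j) ∧
        (∀ i₁ i₂, Lo i₁ i₂ ≤ y i₁ + y i₂ ∧ y i₁ + y i₂ ≤ Gam i₁ i₂) ∧
        (∀ i j, mlow i + xl j + gam i j ≤ y i + x j ∧
          y i + x j ≤ Mup i + xu j - gam i j)) ∧
          z = Sum.elim (Sum.elim x y) (Sum.elim (fun j => -x j) (fun i => -y i))}
      = {z : ((Fin m ⊕ Fin n) ⊕ (Fin m ⊕ Fin n)) → ℝ |
            ∀ t : Fin m ⊕ Fin n, z (Sum.inl t) + z (Sum.inr t) = 0}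
        ∩ tconv (octGens m n xl xu mlow Mup Delta Gam Lo delta gam) :=
  octagon_eq_manifold_inter_tropical_general m n w b xl xu hbounds mlow Mup hmlow hMup Delta delta
    hDelta hdelta Gam Lo gam hGam hLo hgam
end

section
/- Let p_1, …, p_m be pairwise distinct points of ℝⁿ, let H = tconv(p_1,…,p_m), let a ≤ b be reals, and let I ⊆ {1,…,m} be such that: (i) for every i ∈ I and every j ∈ {1,…,m} \ {i}, it is not the case that p_j ≤ p_i componentwise; (ii) for every i ∈ {1,…,m} \ I there exists j ∈ {1,…,m} \ {i} with p_j ≤ p_i componentwise. Then H × [a,b] ⊆ ℝ^{n+1} equals the tropical convex hull of the family of points {(p_i, a) : 1 ≤ i ≤ m} ∪ {(p_i, b) : i ∈ I}. -/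
theorem product_with_interval_eq_tropicalHull (n m : ℕ) (p : Fin m → Fin n → ℝ)
    (hdist : Function.Injective p)
    (a b : ℝ) (hab : a ≤ b) (I : Finset (Fin m))
    (h1 : ∀ i ∈ I, ∀ j, j ≠ i → ¬ (∀ t, p j t ≤ p i t))
    (h2 : ∀ i ∉ I, ∃ j, j ≠ i ∧ ∀ t, p j t ≤ p i t) :
    {z : Option (Fin n) → ℝ | (fun t => z (some t)) ∈ tconv p ∧ z none ∈ Set.Icc a b}
      = tconv (Sum.elim
          (fun i : Fin m => fun o : Option (Fin n) => Option.elim o a (p i))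
          (fun i : {i : Fin m // i ∈ I} => fun o : Option (Fin n) => Option.elim o b (p i.1))) := by
  classical
  ext z
  simp only [Set.mem_setOf_eq, Set.mem_Icc, tconv]
  constructor
  · rintro ⟨⟨ν, hν0, ⟨k0, hk0⟩, hνg⟩, hca, hcb⟩
    have hub : ∀ i t, ν i + p i t ≤ z (some t) := fun i t => (hνg t).2 ⟨i, rfl⟩
    set μ : Fin m → ℝ :=
      fun i => min 0 (sInf (Set.range fun t => z (some t) - p i t)) with hμdef
    have hμ0 : ∀ i, μ i ≤ 0 := fun i => min_le_left _ _
    have hfeas : ∀ i t, μ i + p i t ≤ z (some t) := by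
      intro i t
      have h2' : sInf (Set.range fun t => z (some t) - p i t) ≤ z (some t) - p i t :=
        csInf_le (Set.Finite.bddBelow (Set.finite_range _)) ⟨t, rfl⟩
      have h3 := min_le_right (0:ℝ) (sInf (Set.range fun t => z (some t) - p i t))
      simp only [hμdef]
      linarith
    have hge : ∀ i, ν i ≤ μ i := by
      intro i
      refine le_min (hν0 i) ?_
      rcases isEmpty_or_nonempty (Fin n) with h | h
      · rw [Set.range_eq_empty, Real.sInf_empty]; exact hν0 i
      · refine le_csInf (Set.range_nonempty _) ?_
        rintro _ ⟨t, rfl⟩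
        show ν i ≤ z (some t) - p i t
        linarith [hub i t]
    have hmono : ∀ i j, (∀ t, p j t ≤ p i t) → μ i ≤ μ j := by
      intro i j hij
      refine min_le_min le_rfl ?_
      rcases isEmpty_or_nonempty (Fin n) with h | h
      · rw [Set.range_eq_empty, Set.range_eq_empty]
      · refine le_csInf (Set.range_nonempty _) ?_
        rintro _ ⟨t, rfl⟩
        show sInf (Set.range fun t => z (some t) - p i t) ≤ z (some t) - p j t
        have h4 : sInf (Set.range fun t => z (some t) - p i t) ≤ z (some t) - p i t :=
          csInf_le (Set.Finite.bddBelow (Set.finite_range _)) ⟨t, rfl⟩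
        have := hij t
        linarith
    have hμk0 : μ k0 = 0 := le_antisymm (hμ0 k0) (hk0 ▸ hge k0)
    have hzero : ∃ i, i ∈ I ∧ μ i = 0 := by
      obtain ⟨i1, hi1S, hi1min⟩ := Finset.exists_min_image
        (Finset.univ.filter fun i => μ i = 0) (fun i => ∑ t, p i t)
        ⟨k0, by simp [hμk0]⟩
      by_cases hI : i1 ∈ I
      · exact ⟨i1, hI, (Finset.mem_filter.1 hi1S).2⟩
      · exfalso
        obtain ⟨j, hji, hjle⟩ := h2 i1 hI
        have hμj : μ j = 0 := by
          have h5 := hmono i1 j hjle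
          rw [(Finset.mem_filter.1 hi1S).2] at h5
          exact le_antisymm (hμ0 j) h5
        have hne : ∃ t, p j t ≠ p i1 t := by
          by_contra hc
          push_neg at hc
          exact hji (hdist (funext hc))
        obtain ⟨t0, ht0⟩ := hne
        have hlt : ∑ t, p j t < ∑ t, p i1 t :=
          Finset.sum_lt_sum (fun t _ => hjle t)
            ⟨t0, Finset.mem_univ _, lt_of_le_of_ne (hjle t0) ht0⟩
        have := hi1min j (by simp [hμj])
        linarith
    obtain ⟨i1, hi1I, hμi1⟩ := hzero
    refine ⟨Sum.elim μ (fun j => min (μ j.1) (z none - b)), ?_, ?_, ?_⟩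
    · rintro (i | j)
      · exact hμ0 i
      · exact le_trans (min_le_left _ _) (hμ0 j.1)
    · exact ⟨Sum.inl k0, hμk0⟩
    · intro t
      match t with
      | none =>
        constructor
        · refine ⟨Sum.inr ⟨i1, hi1I⟩, ?_⟩
          simp only [Sum.elim_inr, Option.elim]
          rw [hμi1]
          have h6 : min (0:ℝ) (z none - b) = z none - b := min_eq_right (by linarith)
          rw [h6]; ring
        · rintro _ ⟨(i | j), rfl⟩
          · simp only [Sum.elim_inl, Option.elim]
            have := hμ0 i; linarith
          · simp only [Sum.elim_inr, Option.elim]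
            have := min_le_right (μ j.1) (z none - b); linarith
      | some t =>
        constructor
        · obtain ⟨i0, hi0⟩ := (hνg t).1
          have hi0' : ν i0 + p i0 t = z (some t) := hi0
          refine ⟨Sum.inl i0, ?_⟩
          simp only [Sum.elim_inl, Option.elim]
          have ha1 := hfeas i0 t
          have ha2 := hge i0
          linarith
        · rintro _ ⟨(i | j), rfl⟩
          · simpa using hfeas i t
          · simp only [Sum.elim_inr, Option.elim]
            have h7 := hfeas j.1 t
            have h8 := min_le_left (μ j.1) (z none - b)
            linarith
  · rintro ⟨lam, hl0, ⟨k0, hk0⟩, hg⟩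
    set μ : Fin m → ℝ := fun i =>
      if h : i ∈ I then max (lam (Sum.inl i)) (lam (Sum.inr ⟨i, h⟩))
      else lam (Sum.inl i) with hμdef
    have hμle : ∀ i, μ i ≤ 0 := by
      intro i
      by_cases h : i ∈ I
      · simp only [hμdef, h, dif_pos, max_le_iff]
        exact ⟨hl0 _, hl0 _⟩
      · simp only [hμdef, h, dif_neg, not_false_iff]
        exact hl0 _
    have hlinl : ∀ i, lam (Sum.inl i) ≤ μ i := by
      intro i
      by_cases h : i ∈ I
      · simp only [hμdef, h, dif_pos]; exact le_max_left _ _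
      · simp only [hμdef, h, dif_neg, not_false_iff, le_refl]
    have hlinr : ∀ j : {i : Fin m // i ∈ I}, lam (Sum.inr j) ≤ μ j.1 := by
      intro j
      simp only [hμdef, j.2, dif_pos]
      exact le_max_right _ _
    have hub : ∀ k (t : Option (Fin n)),
        lam k + (Sum.elim
          (fun i : Fin m => fun o : Option (Fin n) => Option.elim o a (p i))
          (fun i : {i : Fin m // i ∈ I} => fun o : Option (Fin n) => Option.elim o b (p i.1))) k t
          ≤ z t := fun k t => (hg t).2 ⟨k, rfl⟩
    constructor
    · refine ⟨μ, hμle, ?_, ?_⟩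
      · rcases k0 with i | j
        · exact ⟨i, le_antisymm (hμle i) (hk0 ▸ hlinl i)⟩
        · exact ⟨j.1, le_antisymm (hμle j.1) (hk0 ▸ hlinr j)⟩
      · intro t
        constructor
        · obtain ⟨k, hkeq⟩ := (hg (some t)).1
          rcases k with i | j
          · refine ⟨i, ?_⟩
            simp only [Sum.elim_inl, Option.elim] at hkeq
            have hb1 := hub (Sum.inl i) (some t)
            simp only [Sum.elim_inl, Option.elim] at hb1
            have hb2 := hlinl i
            have hb3 : μ i + p i t ≤ z (some t) := by
              by_cases h : i ∈ I
              · have := hub (Sum.inr ⟨i, h⟩) (some t)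
                simp only [Sum.elim_inr, Option.elim] at this
                simp only [hμdef, h, dif_pos]
                rcases max_cases (lam (Sum.inl i)) (lam (Sum.inr ⟨i, h⟩)) with ⟨he, _⟩ | ⟨he, _⟩ <;>
                  rw [he] <;> linarith
              · simp only [hμdef, h, dif_neg, not_false_iff]; linarith
            show μ i + p i t = z (some t)
            linarith
          · refine ⟨j.1, ?_⟩
            simp only [Sum.elim_inr, Option.elim] at hkeq
            have hb2 := hlinr j
            have hb3 : μ j.1 + p j.1 t ≤ z (some t) := by
              have hc1 := hub (Sum.inl j.1) (some t)
              simp only [Sum.elim_inl, Option.elim] at hc1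
              have hc2 := hub (Sum.inr j) (some t)
              simp only [Sum.elim_inr, Option.elim] at hc2
              simp only [hμdef, j.2, dif_pos]
              rcases max_cases (lam (Sum.inl j.1)) (lam (Sum.inr ⟨j.1, j.2⟩)) with ⟨he, _⟩ | ⟨he, _⟩ <;>
                rw [he] <;> linarith
            show μ j.1 + p j.1 t = z (some t)
            linarith
        · rintro _ ⟨i, rfl⟩
          by_cases h : i ∈ I
          · have hc1 := hub (Sum.inl i) (some t)
            simp only [Sum.elim_inl, Option.elim] at hc1
            have hc2 := hub (Sum.inr ⟨i, h⟩) (some t)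
            simp only [Sum.elim_inr, Option.elim] at hc2
            simp only [hμdef, h, dif_pos]
            rcases max_cases (lam (Sum.inl i)) (lam (Sum.inr ⟨i, h⟩)) with ⟨he, _⟩ | ⟨he, _⟩ <;>
              rw [he] <;> linarith
          · have hc1 := hub (Sum.inl i) (some t)
            simp only [Sum.elim_inl, Option.elim] at hc1
            simp only [hμdef, h, dif_neg, not_false_iff]
            linarith
    · constructor
      · have hc1 := hub k0 none
        rw [hk0] at hc1
        rcases k0 with i | j
        · simp only [Sum.elim_inl, Option.elim] at hc1; linarith
        · simp only [Sum.elim_inr, Option.elim] at hc1; linarith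
      · obtain ⟨k, hkeq⟩ := (hg none).1
        rcases k with i | j
        · simp only [Sum.elim_inl, Option.elim] at hkeq
          have := hl0 (Sum.inl i); linarith
        · simp only [Sum.elim_inr, Option.elim] at hkeq
          have := hl0 (Sum.inr j); linarith
end

section
/- Let f(x) = λx + μ with λ, μ ∈ ℝ, let a < b be reals, and let a = c_0 < c_1 < … < c_N = b be a subdivision. Define the set P ⊆ ℝ² by: if λ ≤ 0, P = {(x,y) : a ≤ x, f(b) ≤ y, max(x − b, y − f(a)) ≤ 0, and 0 ≤ max(x − c_k, y − f(c_k)) for all k = 1,…,N−1}; if 0 ≤ λ ≤ 1, P = {(x,y) : y − f(a) ≤ x − a, y − f(b) ≤ 0, max(x − b + f(b), f(a)) ≤ y, and y − f(c_k) ≤ max(0, x − c_k) for all k = 1,…,N−1}; if λ ≥ 1, P = {(x,y) : max(y − f(b) + b, a) ≤ x, x ≤ b, x − a ≤ y − f(a), and x − c_k ≤ max(0, y − f(c_k)) for all k = 1,…,N−1}. Then for every x ∈ [a,b], the point (x, f(x)) belongs to P. -/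
theorem graph_mem_subdivided_polyhedron (lam mu a b : ℝ) (hab : a < b)
    (N : ℕ) (hN : 1 ≤ N) (c : ℕ → ℝ) (hc0 : c 0 = a) (hcN : c N = b)
    (hmono : ∀ k < N, c k < c (k + 1))
    (f : ℝ → ℝ) (hf : ∀ t, f t = lam * t + mu) :
    ∀ x ∈ Set.Icc a b,
      (lam ≤ 0 →
        a ≤ x ∧ f b ≤ f x ∧ max (x - b) (f x - f a) ≤ 0 ∧
          ∀ k, 1 ≤ k → k < N → 0 ≤ max (x - c k) (f x - f (c k))) ∧
      (0 ≤ lam → lam ≤ 1 →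
        f x - f a ≤ x - a ∧ f x - f b ≤ 0 ∧ max (x - b + f b) (f a) ≤ f x ∧
          ∀ k, 1 ≤ k → k < N → f x - f (c k) ≤ max 0 (x - c k)) ∧
      (1 ≤ lam →
        max (f x - f b + b) a ≤ x ∧ x ≤ b ∧ x - a ≤ f x - f a ∧
          ∀ k, 1 ≤ k → k < N → x - c k ≤ max 0 (f x - f (c k))) := by
  rintro x ⟨hx1, hx2⟩
  simp only [hf]
  refine ⟨fun hl => ⟨hx1, by nlinarith, ?_, fun k _ _ => ?_⟩,
    fun hl0 hl1 => ⟨by nlinarith, by nlinarith, ?_, fun k _ _ => ?_⟩,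
    fun hl => ⟨?_, hx2, by nlinarith, fun k _ _ => ?_⟩⟩
  · exact max_le (by linarith) (by nlinarith)
  · rcases le_or_gt (c k) x with h | h
    · exact le_max_of_le_left (by linarith)
    · exact le_max_of_le_right (by nlinarith)
  · refine max_le (by nlinarith) (by nlinarith)
  · rcases le_or_gt (c k) x with h | h
    · exact le_max_of_le_right (by nlinarith)
    · exact le_max_of_le_left (by nlinarith)
  · refine max_le (by nlinarith) hx1
  · rcases le_or_gt (c k) x with h | h
    · exact le_max_of_le_right (by nlinarith)
    · exact le_max_of_le_left (by nlinarith)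
end

section
/- Let f(x) = λx + μ with λ, μ ∈ ℝ, let a < b be reals, and let a = c_0 < c_1 < … < c_N = b be a subdivision. Define P ⊆ ℝ² by: if λ ≤ 0, P = {(x,y) : a ≤ x, f(b) ≤ y, max(x − b, y − f(a)) ≤ 0, and 0 ≤ max(x − c_k, y − f(c_k)) for k = 1,…,N−1}; if 0 ≤ λ ≤ 1, P = {(x,y) : y − f(a) ≤ x − a, y − f(b) ≤ 0, max(x − b + f(b), f(a)) ≤ y, and y − f(c_k) ≤ max(0, x − c_k) for k = 1,…,N−1}; if λ ≥ 1, P = {(x,y) : max(y − f(b) + b, a) ≤ x, x ≤ b, x − a ≤ y − f(a), and x − c_k ≤ max(0, y − f(c_k)) for k = 1,…,N−1}. Then P equals the tropical convex hull of the N+2 points A = (a, f(a)), B = (b, f(b)) and C_i for i = 1,…,N, where C_i = (c_{i−1}, f(c_i)) if λ ≤ 0, C_i = (c_{i−1} + f(c_i) − f(c_{i−1}), f(c_i)) if 0 ≤ λ ≤ 1, and C_i = (c_i, f(c_{i−1}) + c_i − c_{i−1}) if λ ≥ 1. -/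
lemma tconv_mem {d i : Type*} [Fintype i] {v : i → d → ℝ} {x : d → ℝ} :
    x ∈ tconv v ↔ ∃ lam : i → ℝ, (∀ k, lam k ≤ 0) ∧ (∃ k, lam k = 0) ∧
      (∀ k t, lam k + v k t ≤ x t) ∧ (∀ t, ∃ k, lam k + v k t = x t) := by
  constructor
  · rintro ⟨l, h1, h2, h3⟩
    exact ⟨l, h1, h2, fun k t => (h3 t).2 ⟨k, rfl⟩, fun t => (h3 t).1⟩
  · rintro ⟨l, h1, h2, h3, h4⟩
    refine ⟨l, h1, h2, fun t => ⟨h4 t, ?_⟩⟩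
    rintro y ⟨k, rfl⟩; exact h3 k t

lemma case1 (lam mu a b : ℝ) (hab : a < b)
    (N : ℕ) (hN : 1 ≤ N) (c : ℕ → ℝ) (hc0 : c 0 = a) (hcN : c N = b)
    (hmono : ∀ k < N, c k < c (k + 1))
    (f : ℝ → ℝ) (hf : ∀ t, f t = lam * t + mu) (hlam : lam ≤ 0) :
      {z : Fin 2 → ℝ | a ≤ z 0 ∧ f b ≤ z 1 ∧ max (z 0 - b) (z 1 - f a) ≤ 0 ∧
          ∀ k, 1 ≤ k → k < N → 0 ≤ max (z 0 - c k) (z 1 - f (c k))}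
        = tconv (Sum.elim ![![a, f a], ![b, f b]]
            (fun k : Fin N => ![c (k : ℕ), f (c ((k : ℕ) + 1))])) := by
  have hmono' : ∀ k l : ℕ, k ≤ l → l ≤ N → c k ≤ c l := by
    intro k l hkl hlN
    induction l with
    | zero => simp [Nat.le_zero.mp hkl]
    | succ n ih =>
      rcases Nat.lt_or_ge k (n+1) with h | h
      · exact le_trans (ih (Nat.lt_succ_iff.mp h) (by omega))
          (le_of_lt (hmono n (by omega)))
      · have : k = n + 1 := le_antisymm hkl h
        simp [this]
  have hca : ∀ k, k ≤ N → a ≤ c k := fun k hk => hc0 ▸ hmono' 0 k (Nat.zero_le k) hk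
  have hcb : ∀ k, k ≤ N → c k ≤ b := fun k hk => hcN ▸ hmono' k N hk le_rfl
  have hfd : ∀ x y : ℝ, x ≤ y → f y ≤ f x := by
    intro x y h
    have : f x - f y = lam * (x - y) := by simp [hf]; ring
    nlinarith
  ext z
  simp only [Set.mem_setOf_eq, tconv_mem]
  constructor
  · rintro ⟨h1, h2, h3, h4⟩
    have hzb : z 0 - b ≤ 0 := le_trans (le_max_left _ _) h3
    have hza : z 1 - f a ≤ 0 := le_trans (le_max_right _ _) h3
    -- find j
    have hex : ∃ j : ℕ, j < N ∧ c j ≤ z 0 ∧ f (c (j+1)) ≤ z 1 := by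
      by_contra hcon
      push_neg at hcon
      have hall : ∀ j, j ≤ N → c j ≤ z 0 := by
        intro j hj
        induction j with
        | zero => rw [hc0]; exact h1
        | succ n ih =>
          have hn : c n ≤ z 0 := ih (by omega)
          have hnN : n < N := by omega
          have hlt := hcon n hnN hn
          rcases Nat.lt_or_ge (n+1) N with h | h
          · have hk := h4 (n+1) (by omega) h
            rcases le_max_iff.mp hk with hh | hh
            · linarith
            · linarith
          · exfalso
            have : n + 1 = N := by omega
            rw [this, hcN] at hlt; linarith
      have h5 := hcon (N-1) (by omega) (hall (N-1) (by omega))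
      rw [(by omega : N - 1 + 1 = N), hcN] at h5
      linarith
    obtain ⟨j, hjN, hj1, hj2⟩ := hex
    refine ⟨Sum.elim ![z 1 - f a, z 0 - b]
      (fun j : Fin N => min 0 (min (z 0 - c (j:ℕ)) (z 1 - f (c ((j:ℕ)+1))))), ?_, ?_, ?_, ?_⟩
    · rintro (i | j)
      · fin_cases i
        · exact hza
        · exact hzb
      · exact min_le_left _ _
    · refine ⟨Sum.inr ⟨j, hjN⟩, ?_⟩
      show min 0 (min (z 0 - c j) (z 1 - f (c (j+1)))) = 0
      exact min_eq_left (le_min (by linarith) (by linarith))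
    · rintro (i | k) t
      · fin_cases i <;> fin_cases t <;>
          simp only [Sum.elim_inl, Sum.elim_inr, Fin.mk_zero, Fin.mk_one, Fin.isValue, Matrix.cons_val_zero, Matrix.cons_val_one, Matrix.head_cons, zero_add] <;>
          linarith
      · fin_cases t <;>
          simp only [Sum.elim_inl, Sum.elim_inr, Fin.mk_zero, Fin.mk_one, Fin.isValue, Matrix.cons_val_zero, Matrix.cons_val_one, Matrix.head_cons, zero_add]
        · have : min 0 (min (z 0 - c (k:ℕ)) (z 1 - f (c ((k:ℕ)+1)))) ≤ z 0 - c (k:ℕ) :=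
            le_trans (min_le_right _ _) (min_le_left _ _)
          linarith
        · have : min 0 (min (z 0 - c (k:ℕ)) (z 1 - f (c ((k:ℕ)+1)))) ≤ z 1 - f (c ((k:ℕ)+1)) :=
            le_trans (min_le_right _ _) (min_le_right _ _)
          linarith
    · intro t
      fin_cases t
      · exact ⟨Sum.inl 1, by simp⟩
      · exact ⟨Sum.inl 0, by simp⟩
  · rintro ⟨l, hneg, ⟨k0, hk0⟩, hub, hat⟩
    have hA0 := hub (Sum.inl 0) 0
    have hA1 := hub (Sum.inl 0) 1
    have hB0 := hub (Sum.inl 1) 0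
    have hB1 := hub (Sum.inl 1) 1
    simp only [Sum.elim_inl, Sum.elim_inr, Fin.mk_zero, Fin.mk_one, Fin.isValue, Matrix.cons_val_zero, Matrix.cons_val_one, Matrix.head_cons, zero_add] at hA0 hA1 hB0 hB1
    have hlA := hneg (Sum.inl 0)
    have hlB := hneg (Sum.inl 1)
    -- lower bounds from k0
    have hlow : a ≤ z 0 ∧ f b ≤ z 1 := by
      rcases k0 with i | j
      · have h0 := hub (Sum.inl i) 0
        have h1 := hub (Sum.inl i) 1
        rw [hk0] at h0 h1
        fin_cases i <;>
          simp only [Sum.elim_inl, Sum.elim_inr, Fin.mk_zero, Fin.mk_one, Fin.isValue, Matrix.cons_val_zero, Matrix.cons_val_one, Matrix.head_cons, zero_add] at h0 h1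
        · exact ⟨h0, le_trans (hfd a b hab.le) h1⟩
        · exact ⟨le_trans hab.le h0, h1⟩
      · have h0 := hub (Sum.inr j) 0
        have h1 := hub (Sum.inr j) 1
        rw [hk0] at h0 h1
        simp only [Sum.elim_inl, Sum.elim_inr, Fin.mk_zero, Fin.mk_one, Fin.isValue, Matrix.cons_val_zero, Matrix.cons_val_one, Matrix.head_cons, zero_add] at h0 h1
        refine ⟨le_trans (hca _ (by omega)) h0, le_trans ?_ h1⟩
        rw [← hcN]; exact hfd _ _ (hmono' _ N (by omega) le_rfl)
    -- upper bounds from attainment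
    have hup : z 0 ≤ b ∧ z 1 ≤ f a := by
      constructor
      · obtain ⟨k, hk⟩ := hat 0
        rcases k with i | j
        · fin_cases i <;>
            simp only [Sum.elim_inl, Sum.elim_inr, Fin.mk_zero, Fin.mk_one, Fin.isValue, Matrix.cons_val_zero, Matrix.cons_val_one, Matrix.head_cons, zero_add] at hk <;>
            [(have := hneg (Sum.inl 0)); (have := hneg (Sum.inl 1))] <;> linarith
        · simp only [Sum.elim_inl, Sum.elim_inr, Fin.mk_zero, Fin.mk_one, Fin.isValue, Matrix.cons_val_zero, Matrix.cons_val_one, Matrix.head_cons, zero_add] at hk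
          have := hneg (Sum.inr j)
          have := hcb (j:ℕ) (by omega)
          linarith
      · obtain ⟨k, hk⟩ := hat 1
        rcases k with i | j
        · fin_cases i <;>
            simp only [Sum.elim_inl, Sum.elim_inr, Fin.mk_zero, Fin.mk_one, Fin.isValue, Matrix.cons_val_zero, Matrix.cons_val_one, Matrix.head_cons, zero_add] at hk <;>
            [(have := hneg (Sum.inl 0)); (have := hneg (Sum.inl 1))] <;>
            [linarith; (have := hfd a b hab.le; linarith)]
        · simp only [Sum.elim_inl, Sum.elim_inr, Fin.mk_zero, Fin.mk_one, Fin.isValue, Matrix.cons_val_zero, Matrix.cons_val_one, Matrix.head_cons, zero_add] at hk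
          have := hneg (Sum.inr j)
          have := hfd a (c ((j:ℕ)+1)) (hca _ (by omega))
          linarith
    refine ⟨hlow.1, hlow.2, max_le (by linarith [hup.1]) (by linarith [hup.2]), ?_⟩
    intro k hk1 hkN
    rcases k0 with i | j
    · have h0 := hub (Sum.inl i) 0
      have h1 := hub (Sum.inl i) 1
      rw [hk0] at h0 h1
      fin_cases i <;>
        simp only [Sum.elim_inl, Sum.elim_inr, Fin.mk_zero, Fin.mk_one, Fin.isValue, Matrix.cons_val_zero, Matrix.cons_val_one, Matrix.head_cons, zero_add] at h0 h1
      · refine le_trans ?_ (le_max_right _ _)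
        have := hfd a (c k) (hca k (by omega))
        linarith
      · refine le_trans ?_ (le_max_left _ _)
        have := hcb k (by omega)
        linarith
    · have h0 := hub (Sum.inr j) 0
      have h1 := hub (Sum.inr j) 1
      rw [hk0] at h0 h1
      simp only [Sum.elim_inl, Sum.elim_inr, Fin.mk_zero, Fin.mk_one, Fin.isValue, Matrix.cons_val_zero, Matrix.cons_val_one, Matrix.head_cons, zero_add] at h0 h1
      rcases Nat.lt_or_ge (j:ℕ) k with h | h
      · refine le_trans ?_ (le_max_right _ _)
        have h2 : f (c k) ≤ f (c ((j:ℕ)+1)) := hfd _ _ (hmono' ((j:ℕ)+1) k h (by omega))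
        linarith
      · refine le_trans ?_ (le_max_left _ _)
        have := hmono' k (j:ℕ) h (by omega)
        linarith

lemma case2 (lam mu a b : ℝ) (hab : a < b)
    (N : ℕ) (hN : 1 ≤ N) (c : ℕ → ℝ) (hc0 : c 0 = a) (hcN : c N = b)
    (hmono : ∀ k < N, c k < c (k + 1))
    (f : ℝ → ℝ) (hf : ∀ t, f t = lam * t + mu) (hl0 : 0 ≤ lam) (hl1 : lam ≤ 1) :
      {z : Fin 2 → ℝ | z 1 - f a ≤ z 0 - a ∧ z 1 - f b ≤ 0 ∧
          max (z 0 - b + f b) (f a) ≤ z 1 ∧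
          ∀ k, 1 ≤ k → k < N → z 1 - f (c k) ≤ max 0 (z 0 - c k)}
        = tconv (Sum.elim ![![a, f a], ![b, f b]]
            (fun k : Fin N =>
              ![c (k : ℕ) + f (c ((k : ℕ) + 1)) - f (c (k : ℕ)), f (c ((k : ℕ) + 1))])) := by
  have hmono' : ∀ k l : ℕ, k ≤ l → l ≤ N → c k ≤ c l := by
    intro k l hkl hlN
    induction l with
    | zero => simp [Nat.le_zero.mp hkl]
    | succ n ih =>
      rcases Nat.lt_or_ge k (n+1) with h | h
      · exact le_trans (ih (Nat.lt_succ_iff.mp h) (by omega))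
          (le_of_lt (hmono n (by omega)))
      · have : k = n + 1 := le_antisymm hkl h
        simp [this]
  have hca : ∀ k, k ≤ N → a ≤ c k := fun k hk => hc0 ▸ hmono' 0 k (Nat.zero_le k) hk
  have hcb : ∀ k, k ≤ N → c k ≤ b := fun k hk => hcN ▸ hmono' k N hk le_rfl
  have hfm : ∀ x y : ℝ, x ≤ y → f x ≤ f y := by
    intro x y h
    have : f y - f x = lam * (y - x) := by simp [hf]; ring
    nlinarith
  have hfs : ∀ x y : ℝ, x ≤ y → f y - f x ≤ y - x := by
    intro x y h
    have : f y - f x = lam * (y - x) := by simp [hf]; ring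
    nlinarith
  ext z
  simp only [Set.mem_setOf_eq, tconv_mem]
  constructor
  · rintro ⟨h1, h2, h3, h4⟩
    have h3a : z 0 - b + f b ≤ z 1 := le_trans (le_max_left _ _) h3
    have h3b : f a ≤ z 1 := le_trans (le_max_right _ _) h3
    have hz0b : z 0 ≤ b := by linarith
    have hz0a : a ≤ z 0 := by linarith
    have hex : ∃ j : ℕ, j < N ∧ z 1 - f (c j) ≤ z 0 - c j ∧ z 1 ≤ f (c (j+1)) := by
      by_contra hcon
      push_neg at hcon
      have hall : ∀ j, j ≤ N → z 1 - f (c j) ≤ z 0 - c j := by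
        intro j hj
        induction j with
        | zero => rw [hc0]; exact h1
        | succ n ih =>
          have hn := ih (by omega)
          have hnN : n < N := by omega
          have hlt := hcon n hnN hn
          rcases Nat.lt_or_ge (n+1) N with h | h
          · have hk := h4 (n+1) (by omega) h
            rcases le_max_iff.mp hk with hh | hh
            · linarith
            · linarith
          · exfalso
            have : n + 1 = N := by omega
            rw [this, hcN] at hlt; linarith
      have h5 := hcon (N-1) (by omega) (hall (N-1) (by omega))
      rw [(by omega : N - 1 + 1 = N), hcN] at h5
      linarith
    obtain ⟨j, hjN, hj1, hj2⟩ := hex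
    refine ⟨Sum.elim ![0, z 0 - b]
      (fun j : Fin N => min 0 (min (z 0 - (c (j:ℕ) + f (c ((j:ℕ)+1)) - f (c (j:ℕ))))
        (z 1 - f (c ((j:ℕ)+1))))), ?_, ⟨Sum.inl 0, rfl⟩, ?_, ?_⟩
    · rintro (i | j)
      · fin_cases i
        · exact le_refl 0
        · exact sub_nonpos.mpr hz0b
      · exact min_le_left _ _
    · rintro (i | k) t
      · fin_cases i <;> fin_cases t <;>
          simp only [Sum.elim_inl, Sum.elim_inr, Fin.mk_zero, Fin.mk_one, Fin.isValue,
            Matrix.cons_val_zero, Matrix.cons_val_one, Matrix.head_cons, zero_add] <;>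
          linarith
      · fin_cases t <;>
          simp only [Sum.elim_inl, Sum.elim_inr, Fin.mk_zero, Fin.mk_one, Fin.isValue,
            Matrix.cons_val_zero, Matrix.cons_val_one, Matrix.head_cons, zero_add]
        · have : min 0 (min (z 0 - (c (k:ℕ) + f (c ((k:ℕ)+1)) - f (c (k:ℕ))))
              (z 1 - f (c ((k:ℕ)+1)))) ≤ z 0 - (c (k:ℕ) + f (c ((k:ℕ)+1)) - f (c (k:ℕ))) :=
            le_trans (min_le_right _ _) (min_le_left _ _)
          linarith
        · have : min 0 (min (z 0 - (c (k:ℕ) + f (c ((k:ℕ)+1)) - f (c (k:ℕ))))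
              (z 1 - f (c ((k:ℕ)+1)))) ≤ z 1 - f (c ((k:ℕ)+1)) :=
            le_trans (min_le_right _ _) (min_le_right _ _)
          linarith
    · intro t
      fin_cases t
      · exact ⟨Sum.inl 1, by simp⟩
      · refine ⟨Sum.inr ⟨j, hjN⟩, ?_⟩
        simp only [Sum.elim_inl, Sum.elim_inr, Fin.mk_zero, Fin.mk_one, Fin.isValue,
          Matrix.cons_val_zero, Matrix.cons_val_one, Matrix.head_cons, zero_add]
        have e1 : min (z 0 - (c j + f (c (j+1)) - f (c j))) (z 1 - f (c (j+1)))
            = z 1 - f (c (j+1)) := min_eq_right (by linarith)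
        rw [e1, min_eq_right (by linarith)]
        ring
  · rintro ⟨l, hneg, ⟨k0, hk0⟩, hub, hat⟩
    have hA0 := hub (Sum.inl 0) 0
    have hA1 := hub (Sum.inl 0) 1
    have hB0 := hub (Sum.inl 1) 0
    have hB1 := hub (Sum.inl 1) 1
    simp only [Sum.elim_inl, Sum.elim_inr, Fin.mk_zero, Fin.mk_one, Fin.isValue,
      Matrix.cons_val_zero, Matrix.cons_val_one, Matrix.head_cons, zero_add] at hA0 hA1 hB0 hB1
    have hlA := hneg (Sum.inl 0)
    have hlB := hneg (Sum.inl 1)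
    -- conjunct 1 : z 1 - f a ≤ z 0 - a
    have c1 : z 1 - f a ≤ z 0 - a := by
      obtain ⟨k, hk⟩ := hat 1
      rcases k with i | j
      · have h0 := hub (Sum.inl i) 0
        fin_cases i <;>
          simp only [Sum.elim_inl, Sum.elim_inr, Fin.mk_zero, Fin.mk_one, Fin.isValue,
            Matrix.cons_val_zero, Matrix.cons_val_one, Matrix.head_cons, zero_add] at hk h0
        · linarith
        · have := hfs a b hab.le; linarith
      · have h0 := hub (Sum.inr j) 0
        simp only [Sum.elim_inl, Sum.elim_inr, Fin.mk_zero, Fin.mk_one, Fin.isValue,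
          Matrix.cons_val_zero, Matrix.cons_val_one, Matrix.head_cons, zero_add] at hk h0
        have := hfs a (c (j:ℕ)) (hca _ (by omega))
        linarith
    -- conjunct 2 : z 1 ≤ f b
    have c2 : z 1 - f b ≤ 0 := by
      obtain ⟨k, hk⟩ := hat 1
      rcases k with i | j
      · have hn := hneg (Sum.inl i)
        fin_cases i <;>
          simp only [Sum.elim_inl, Sum.elim_inr, Fin.mk_zero, Fin.mk_one, Fin.isValue,
            Matrix.cons_val_zero, Matrix.cons_val_one, Matrix.head_cons, zero_add] at hk hn
        · have := hfm a b hab.le; linarith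
        · linarith
      · have hn := hneg (Sum.inr j)
        simp only [Sum.elim_inl, Sum.elim_inr, Fin.mk_zero, Fin.mk_one, Fin.isValue,
          Matrix.cons_val_zero, Matrix.cons_val_one, Matrix.head_cons, zero_add] at hk hn
        have : f (c ((j:ℕ)+1)) ≤ f b := by
          rw [← hcN]; exact hfm _ _ (hmono' _ N (by omega) le_rfl)
        linarith
    -- conjunct 3
    have c3a : z 0 - b + f b ≤ z 1 := by
      obtain ⟨k, hk⟩ := hat 0
      rcases k with i | j
      · have h1 := hub (Sum.inl i) 1
        fin_cases i <;>
          simp only [Sum.elim_inl, Sum.elim_inr, Fin.mk_zero, Fin.mk_one, Fin.isValue,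
            Matrix.cons_val_zero, Matrix.cons_val_one, Matrix.head_cons, zero_add] at hk h1
        · have := hfs a b hab.le; linarith
        · linarith
      · have h1 := hub (Sum.inr j) 1
        simp only [Sum.elim_inl, Sum.elim_inr, Fin.mk_zero, Fin.mk_one, Fin.isValue,
          Matrix.cons_val_zero, Matrix.cons_val_one, Matrix.head_cons, zero_add] at hk h1
        have := hfs (c (j:ℕ)) b (hcb _ (by omega))
        linarith
    have c3b : f a ≤ z 1 := by
      have h1 := hub k0 1
      rw [hk0, zero_add] at h1
      refine le_trans ?_ h1
      rcases k0 with i | j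
      · fin_cases i <;>
          simp only [Sum.elim_inl, Sum.elim_inr, Fin.mk_zero, Fin.mk_one, Fin.isValue,
            Matrix.cons_val_zero, Matrix.cons_val_one, Matrix.head_cons]
        · exact le_refl _
        · exact hfm a b hab.le
      · simp only [Sum.elim_inl, Sum.elim_inr, Fin.mk_zero, Fin.mk_one, Fin.isValue,
          Matrix.cons_val_zero, Matrix.cons_val_one, Matrix.head_cons]
        exact hfm a _ (hca _ (by omega))
    refine ⟨c1, c2, max_le c3a c3b, ?_⟩
    intro k hk1 hkN
    obtain ⟨m, hm⟩ := hat 1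
    rcases m with i | j
    · have h0 := hub (Sum.inl i) 0
      have hn := hneg (Sum.inl i)
      fin_cases i <;>
        simp only [Sum.elim_inl, Sum.elim_inr, Fin.mk_zero, Fin.mk_one, Fin.isValue,
          Matrix.cons_val_zero, Matrix.cons_val_one, Matrix.head_cons, zero_add] at hm h0 hn
      · refine le_trans ?_ (le_max_left _ _)
        have := hfm a (c k) (hca k (by omega))
        linarith
      · refine le_trans ?_ (le_max_right _ _)
        have := hfs (c k) b (hcb k (by omega))
        linarith
    · have h0 := hub (Sum.inr j) 0
      have hn := hneg (Sum.inr j)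
      simp only [Sum.elim_inl, Sum.elim_inr, Fin.mk_zero, Fin.mk_one, Fin.isValue,
        Matrix.cons_val_zero, Matrix.cons_val_one, Matrix.head_cons, zero_add] at hm h0 hn
      rcases Nat.lt_or_ge (j:ℕ) k with h | h
      · refine le_trans ?_ (le_max_left _ _)
        have := hfm (c ((j:ℕ)+1)) (c k) (hmono' _ _ (by omega) (by omega))
        linarith
      · refine le_trans ?_ (le_max_right _ _)
        have := hfs (c k) (c (j:ℕ)) (hmono' _ _ h (by omega))
        linarith

lemma case3 (lam mu a b : ℝ) (hab : a < b)
    (N : ℕ) (hN : 1 ≤ N) (c : ℕ → ℝ) (hc0 : c 0 = a) (hcN : c N = b)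
    (hmono : ∀ k < N, c k < c (k + 1))
    (f : ℝ → ℝ) (hf : ∀ t, f t = lam * t + mu) (hl1 : 1 ≤ lam) :
      {z : Fin 2 → ℝ | max (z 1 - f b + b) a ≤ z 0 ∧ z 0 ≤ b ∧ z 0 - a ≤ z 1 - f a ∧
          ∀ k, 1 ≤ k → k < N → z 0 - c k ≤ max 0 (z 1 - f (c k))}
        = tconv (Sum.elim ![![a, f a], ![b, f b]]
            (fun k : Fin N =>
              ![c ((k : ℕ) + 1), f (c (k : ℕ)) + c ((k : ℕ) + 1) - c (k : ℕ)])) := by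
  have hmono' : ∀ k l : ℕ, k ≤ l → l ≤ N → c k ≤ c l := by
    intro k l hkl hlN
    induction l with
    | zero => simp [Nat.le_zero.mp hkl]
    | succ n ih =>
      rcases Nat.lt_or_ge k (n+1) with h | h
      · exact le_trans (ih (Nat.lt_succ_iff.mp h) (by omega))
          (le_of_lt (hmono n (by omega)))
      · have : k = n + 1 := le_antisymm hkl h
        simp [this]
  have hca : ∀ k, k ≤ N → a ≤ c k := fun k hk => hc0 ▸ hmono' 0 k (Nat.zero_le k) hk
  have hcb : ∀ k, k ≤ N → c k ≤ b := fun k hk => hcN ▸ hmono' k N hk le_rfl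
  have hfm : ∀ x y : ℝ, x ≤ y → f x ≤ f y := by
    intro x y h
    have : f y - f x = lam * (y - x) := by simp [hf]; ring
    nlinarith
  have hfs : ∀ x y : ℝ, x ≤ y → y - x ≤ f y - f x := by
    intro x y h
    have : f y - f x = lam * (y - x) := by simp [hf]; ring
    nlinarith
  ext z
  simp only [Set.mem_setOf_eq, tconv_mem]
  constructor
  · rintro ⟨h1, h2, h3, h4⟩
    have h1a : z 1 - f b + b ≤ z 0 := le_trans (le_max_left _ _) h1
    have h1b : a ≤ z 0 := le_trans (le_max_right _ _) h1
    have hz1b : z 1 ≤ f b := by linarith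
    have hex : ∃ j : ℕ, j < N ∧ z 0 - c j ≤ z 1 - f (c j) ∧ z 0 ≤ c (j+1) := by
      by_contra hcon
      push_neg at hcon
      have hall : ∀ j, j ≤ N → z 0 - c j ≤ z 1 - f (c j) := by
        intro j hj
        induction j with
        | zero => rw [hc0]; exact h3
        | succ n ih =>
          have hn := ih (by omega)
          have hnN : n < N := by omega
          have hlt := hcon n hnN hn
          rcases Nat.lt_or_ge (n+1) N with h | h
          · have hk := h4 (n+1) (by omega) h
            rcases le_max_iff.mp hk with hh | hh
            · linarith
            · linarith
          · exfalso
            have : n + 1 = N := by omega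
            rw [this, hcN] at hlt; linarith
      have h5 := hcon (N-1) (by omega) (hall (N-1) (by omega))
      rw [(by omega : N - 1 + 1 = N), hcN] at h5
      linarith
    obtain ⟨j, hjN, hj1, hj2⟩ := hex
    refine ⟨Sum.elim ![0, z 1 - f b]
      (fun j : Fin N => min 0 (min (z 0 - c ((j:ℕ)+1))
        (z 1 - (f (c (j:ℕ)) + c ((j:ℕ)+1) - c (j:ℕ))))), ?_, ⟨Sum.inl 0, rfl⟩, ?_, ?_⟩
    · rintro (i | j)
      · fin_cases i
        · exact le_refl 0
        · exact sub_nonpos.mpr hz1b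
      · exact min_le_left _ _
    · rintro (i | k) t
      · fin_cases i <;> fin_cases t <;>
          simp only [Sum.elim_inl, Sum.elim_inr, Fin.mk_zero, Fin.mk_one, Fin.isValue,
            Matrix.cons_val_zero, Matrix.cons_val_one, Matrix.head_cons, zero_add] <;>
          linarith
      · fin_cases t <;>
          simp only [Sum.elim_inl, Sum.elim_inr, Fin.mk_zero, Fin.mk_one, Fin.isValue,
            Matrix.cons_val_zero, Matrix.cons_val_one, Matrix.head_cons, zero_add]
        · have : min 0 (min (z 0 - c ((k:ℕ)+1))
              (z 1 - (f (c (k:ℕ)) + c ((k:ℕ)+1) - c (k:ℕ)))) ≤ z 0 - c ((k:ℕ)+1) :=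
            le_trans (min_le_right _ _) (min_le_left _ _)
          linarith
        · have : min 0 (min (z 0 - c ((k:ℕ)+1))
              (z 1 - (f (c (k:ℕ)) + c ((k:ℕ)+1) - c (k:ℕ))))
              ≤ z 1 - (f (c (k:ℕ)) + c ((k:ℕ)+1) - c (k:ℕ)) :=
            le_trans (min_le_right _ _) (min_le_right _ _)
          linarith
    · intro t
      fin_cases t
      · refine ⟨Sum.inr ⟨j, hjN⟩, ?_⟩
        simp only [Sum.elim_inl, Sum.elim_inr, Fin.mk_zero, Fin.mk_one, Fin.isValue,
          Matrix.cons_val_zero, Matrix.cons_val_one, Matrix.head_cons, zero_add]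
        have e1 : min (z 0 - c (j+1)) (z 1 - (f (c j) + c (j+1) - c j))
            = z 0 - c (j+1) := min_eq_left (by linarith)
        rw [e1, min_eq_right (by linarith)]
        ring
      · exact ⟨Sum.inl 1, by simp⟩
  · rintro ⟨l, hneg, ⟨k0, hk0⟩, hub, hat⟩
    have hA0 := hub (Sum.inl 0) 0
    have hA1 := hub (Sum.inl 0) 1
    have hB0 := hub (Sum.inl 1) 0
    have hB1 := hub (Sum.inl 1) 1
    simp only [Sum.elim_inl, Sum.elim_inr, Fin.mk_zero, Fin.mk_one, Fin.isValue,
      Matrix.cons_val_zero, Matrix.cons_val_one, Matrix.head_cons, zero_add] at hA0 hA1 hB0 hB1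
    have hlA := hneg (Sum.inl 0)
    have hlB := hneg (Sum.inl 1)
    -- conjunct 1a : z 1 - f b + b ≤ z 0
    have c1a : z 1 - f b + b ≤ z 0 := by
      obtain ⟨m, hm⟩ := hat 1
      rcases m with i | j
      · have h0 := hub (Sum.inl i) 0
        fin_cases i <;>
          simp only [Sum.elim_inl, Sum.elim_inr, Fin.mk_zero, Fin.mk_one, Fin.isValue,
            Matrix.cons_val_zero, Matrix.cons_val_one, Matrix.head_cons, zero_add] at hm h0
        · have := hfs a b hab.le; linarith
        · linarith
      · have h0 := hub (Sum.inr j) 0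
        simp only [Sum.elim_inl, Sum.elim_inr, Fin.mk_zero, Fin.mk_one, Fin.isValue,
          Matrix.cons_val_zero, Matrix.cons_val_one, Matrix.head_cons, zero_add] at hm h0
        have := hfs (c (j:ℕ)) b (hcb _ (by omega))
        linarith
    have c1b : a ≤ z 0 := by
      have h0 := hub k0 0
      rw [hk0, zero_add] at h0
      refine le_trans ?_ h0
      rcases k0 with i | j
      · fin_cases i <;>
          simp only [Sum.elim_inl, Sum.elim_inr, Fin.mk_zero, Fin.mk_one, Fin.isValue,
            Matrix.cons_val_zero, Matrix.cons_val_one, Matrix.head_cons]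
        · exact le_refl _
        · exact hab.le
      · simp only [Sum.elim_inl, Sum.elim_inr, Fin.mk_zero, Fin.mk_one, Fin.isValue,
          Matrix.cons_val_zero, Matrix.cons_val_one, Matrix.head_cons]
        exact hca _ (by omega)
    -- conjunct 2 : z 0 ≤ b
    have c2 : z 0 ≤ b := by
      obtain ⟨m, hm⟩ := hat 0
      rcases m with i | j
      · have hn := hneg (Sum.inl i)
        fin_cases i <;>
          simp only [Sum.elim_inl, Sum.elim_inr, Fin.mk_zero, Fin.mk_one, Fin.isValue,
            Matrix.cons_val_zero, Matrix.cons_val_one, Matrix.head_cons, zero_add] at hm hn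
        · linarith
        · linarith
      · have hn := hneg (Sum.inr j)
        simp only [Sum.elim_inl, Sum.elim_inr, Fin.mk_zero, Fin.mk_one, Fin.isValue,
          Matrix.cons_val_zero, Matrix.cons_val_one, Matrix.head_cons, zero_add] at hm hn
        have := hcb ((j:ℕ)+1) (by omega)
        linarith
    -- conjunct 3 : z 0 - a ≤ z 1 - f a
    have c3 : z 0 - a ≤ z 1 - f a := by
      obtain ⟨m, hm⟩ := hat 0
      rcases m with i | j
      · have h1 := hub (Sum.inl i) 1
        fin_cases i <;>
          simp only [Sum.elim_inl, Sum.elim_inr, Fin.mk_zero, Fin.mk_one, Fin.isValue,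
            Matrix.cons_val_zero, Matrix.cons_val_one, Matrix.head_cons, zero_add] at hm h1
        · linarith
        · have := hfs a b hab.le; linarith
      · have h1 := hub (Sum.inr j) 1
        simp only [Sum.elim_inl, Sum.elim_inr, Fin.mk_zero, Fin.mk_one, Fin.isValue,
          Matrix.cons_val_zero, Matrix.cons_val_one, Matrix.head_cons, zero_add] at hm h1
        have := hfs a (c (j:ℕ)) (hca _ (by omega))
        linarith
    refine ⟨max_le c1a c1b, c2, c3, ?_⟩
    intro k hk1 hkN
    obtain ⟨m, hm⟩ := hat 0
    rcases m with i | j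
    · have h1 := hub (Sum.inl i) 1
      have hn := hneg (Sum.inl i)
      fin_cases i <;>
        simp only [Sum.elim_inl, Sum.elim_inr, Fin.mk_zero, Fin.mk_one, Fin.isValue,
          Matrix.cons_val_zero, Matrix.cons_val_one, Matrix.head_cons, zero_add] at hm h1 hn
      · refine le_trans ?_ (le_max_left _ _)
        have := hca k (by omega)
        linarith
      · refine le_trans ?_ (le_max_right _ _)
        have := hfs (c k) b (hcb k (by omega))
        linarith
    · have h1 := hub (Sum.inr j) 1
      have hn := hneg (Sum.inr j)
      simp only [Sum.elim_inl, Sum.elim_inr, Fin.mk_zero, Fin.mk_one, Fin.isValue,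
        Matrix.cons_val_zero, Matrix.cons_val_one, Matrix.head_cons, zero_add] at hm h1 hn
      rcases Nat.lt_or_ge (j:ℕ) k with h | h
      · refine le_trans ?_ (le_max_left _ _)
        have := hmono' ((j:ℕ)+1) k (by omega) (by omega)
        linarith
      · refine le_trans ?_ (le_max_right _ _)
        have := hfs (c k) (c (j:ℕ)) (hmono' _ _ h (by omega))
        linarith

theorem subdivided_polyhedron_eq_tropicalHull (lam mu a b : ℝ) (hab : a < b)
    (N : ℕ) (hN : 1 ≤ N) (c : ℕ → ℝ) (hc0 : c 0 = a) (hcN : c N = b)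
    (hmono : ∀ k < N, c k < c (k + 1))
    (f : ℝ → ℝ) (hf : ∀ t, f t = lam * t + mu) :
    (lam ≤ 0 →
      {z : Fin 2 → ℝ | a ≤ z 0 ∧ f b ≤ z 1 ∧ max (z 0 - b) (z 1 - f a) ≤ 0 ∧
          ∀ k, 1 ≤ k → k < N → 0 ≤ max (z 0 - c k) (z 1 - f (c k))}
        = tconv (Sum.elim ![![a, f a], ![b, f b]]
            (fun k : Fin N => ![c (k : ℕ), f (c ((k : ℕ) + 1))]))) ∧
    (0 ≤ lam → lam ≤ 1 →
      {z : Fin 2 → ℝ | z 1 - f a ≤ z 0 - a ∧ z 1 - f b ≤ 0 ∧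
          max (z 0 - b + f b) (f a) ≤ z 1 ∧
          ∀ k, 1 ≤ k → k < N → z 1 - f (c k) ≤ max 0 (z 0 - c k)}
        = tconv (Sum.elim ![![a, f a], ![b, f b]]
            (fun k : Fin N =>
              ![c (k : ℕ) + f (c ((k : ℕ) + 1)) - f (c (k : ℕ)), f (c ((k : ℕ) + 1))]))) ∧
    (1 ≤ lam →
      {z : Fin 2 → ℝ | max (z 1 - f b + b) a ≤ z 0 ∧ z 0 ≤ b ∧ z 0 - a ≤ z 1 - f a ∧
          ∀ k, 1 ≤ k → k < N → z 0 - c k ≤ max 0 (z 1 - f (c k))}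
        = tconv (Sum.elim ![![a, f a], ![b, f b]]
            (fun k : Fin N =>
              ![c ((k : ℕ) + 1), f (c (k : ℕ)) + c ((k : ℕ) + 1) - c (k : ℕ)]))) :=
  ⟨fun h => case1 lam mu a b hab N hN c hc0 hcN hmono f hf h,
   fun h0 h1 => case2 lam mu a b hab N hN c hc0 hcN hmono f hf h0 h1,
   fun h => case3 lam mu a b hab N hN c hc0 hcN hmono f hf h⟩
end

section
/- Let x ∈ K and y = f(x). For every i ∈ {1,…,n}, j ∈ {1,…,m} and every real c ∈ [x̲_j, x̄_j]: (a) if w_{i,j} ≤ 0 then 0 ≤ max(x_j − c, y_i − m_i + w_{i,j}(x̄_j − c)); (b) if 0 ≤ w_{i,j} ≤ 1 then y_i − M_i + w_{i,j}(x̄_j − c) ≤ max(0, x_j − c); (c) if w_{i,j} ≥ 1 then x_j − c ≤ max(0, y_i − m_i − w_{i,j}(c − x̲_j)). -/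
lemma my_mul_nonneg_np (a b : ℝ) (ha : a ≤ 0) (hb : b ≤ 0) : 0 ≤ a * b := by nlinarith


theorem subdivision_constraints_sound (m n : ℕ) (hm : 1 ≤ m) (hn : 1 ≤ n)
    (w : Fin n → Fin m → ℝ) (b : Fin n → ℝ)
    (xl xu : Fin m → ℝ) (hbounds : ∀ j, xl j ≤ xu j)
    (mlow Mup : Fin n → ℝ)
    (hmlow : ∀ i, mlow i = b i + ∑ j, w i j * (if w i j < 0 then xu j else xl j))
    (hMup : ∀ i, Mup i = b i + ∑ j, w i j * (if w i j < 0 then xl j else xu j)) :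
    ∀ x : Fin m → ℝ, (∀ j, xl j ≤ x j ∧ x j ≤ xu j) →
    ∀ y : Fin n → ℝ, (∀ i, y i = ∑ j, w i j * x j + b i) →
    ∀ (i : Fin n) (j : Fin m) (c : ℝ), xl j ≤ c → c ≤ xu j →
      (w i j ≤ 0 → 0 ≤ max (x j - c) (y i - mlow i + w i j * (xu j - c))) ∧
      (0 ≤ w i j → w i j ≤ 1 →
        y i - Mup i + w i j * (xu j - c) ≤ max 0 (x j - c)) ∧
      (1 ≤ w i j → x j - c ≤ max 0 (y i - mlow i - w i j * (c - xl j))) := by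
  intro x hx y hy i j c hcl hcu
  have hsum : y i - mlow i
      = ∑ j', w i j' * (x j' - (if w i j' < 0 then xu j' else xl j')) := by
    rw [hy, hmlow]
    simp only [mul_sub, Finset.sum_sub_distrib]
    ring
  have hterm : ∀ j', 0 ≤ w i j' * (x j' - (if w i j' < 0 then xu j' else xl j')) := by
    intro j'
    by_cases h : w i j' < 0
    · simp only [if_pos h]
      exact my_mul_nonneg_np _ _ h.le (by linarith [(hx j').2])
    · simp only [if_neg h]
      exact mul_nonneg (le_of_not_gt h) (by linarith [(hx j').1])
  have hbig : ∀ j', w i j' * (x j' - (if w i j' < 0 then xu j' else xl j')) ≤ y i - mlow i := by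
    intro j'
    rw [hsum]
    exact Finset.single_le_sum (fun k _ => hterm k) (Finset.mem_univ j')
  have hsumM : Mup i - y i
      = ∑ j', w i j' * ((if w i j' < 0 then xl j' else xu j') - x j') := by
    rw [hy, hMup]
    simp only [mul_sub, Finset.sum_sub_distrib]
    ring
  have htermM : ∀ j', 0 ≤ w i j' * ((if w i j' < 0 then xl j' else xu j') - x j') := by
    intro j'
    by_cases h : w i j' < 0
    · simp only [if_pos h]
      exact my_mul_nonneg_np _ _ h.le (by linarith [(hx j').1])
    · simp only [if_neg h]
      exact mul_nonneg (le_of_not_gt h) (by linarith [(hx j').2])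
  have hbigM : ∀ j', w i j' * ((if w i j' < 0 then xl j' else xu j') - x j') ≤ Mup i - y i := by
    intro j'
    rw [hsumM]
    exact Finset.single_le_sum (fun k _ => htermM k) (Finset.mem_univ j')
  refine ⟨?_, ?_, ?_⟩
  · -- (a) w i j ≤ 0
    intro hw
    rcases le_or_gt c (x j) with h | h
    · exact le_max_of_le_left (by linarith)
    · refine le_max_of_le_right ?_
      have hle : w i j * (x j - xu j) ≤ y i - mlow i := by
        by_cases hlt : w i j < 0
        · have := hbig j; rw [if_pos hlt] at this; exact this
        · have hw0 : w i j = 0 := le_antisymm hw (le_of_not_gt hlt)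
          have := hbig j
          rw [hw0] at this ⊢
          simpa using this
      have hprod : 0 ≤ w i j * (x j - c) :=
        my_mul_nonneg_np _ _ hw (by linarith)
      nlinarith [hle, hprod]
  · -- (b) 0 ≤ w i j ≤ 1
    intro hw0 hw1
    have hle : w i j * (xu j - x j) ≤ Mup i - y i := by
      have := hbigM j; rw [if_neg (not_lt.mpr hw0)] at this; exact this
    rcases le_or_gt c (x j) with h | h
    · refine le_trans ?_ (le_max_right _ _)
      nlinarith
    · refine le_trans ?_ (le_max_left _ _)
      nlinarith [mul_nonneg hw0 (sub_nonneg.mpr h.le)]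
  · -- (c) 1 ≤ w i j
    intro hw
    have hw0 : (0:ℝ) ≤ w i j := by linarith
    have hle : w i j * (x j - xl j) ≤ y i - mlow i := by
      have := hbig j; rw [if_neg (not_lt.mpr hw0)] at this; exact this
    rcases le_or_gt c (x j) with h | h
    · refine le_trans ?_ (le_max_right _ _)
      nlinarith
    · exact le_trans (by linarith) (le_max_left _ _)
end

section
/- Fix i ∈ {1,…,n}, a nonempty set I ⊆ {1,…,m} with w_{i,j} ≤ 0 for all j ∈ I, and reals c_j ∈ [x̲_j, x̄_j] for j ∈ I, and set σ = Σ_{j∈I} w_{i,j}(x̄_j − c_j). Then for every x ∈ K: 0 ≤ max(f(x)_i − m_i + σ, max_{j∈I}(x_j − c_j)). -/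
theorem neg_weights_subdivision_constraint (m n : ℕ) (hm : 1 ≤ m) (hn : 1 ≤ n)
    (w : Fin n → Fin m → ℝ) (b : Fin n → ℝ)
    (xl xu : Fin m → ℝ) (hbounds : ∀ j, xl j ≤ xu j)
    (mlow : Fin n → ℝ)
    (hmlow : ∀ i, mlow i = b i + ∑ j, w i j * (if w i j < 0 then xu j else xl j))
    (i : Fin n) (I : Finset (Fin m)) (hI : I.Nonempty)
    (hw : ∀ j ∈ I, w i j ≤ 0)
    (c : Fin m → ℝ) (hc : ∀ j ∈ I, xl j ≤ c j ∧ c j ≤ xu j)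
    (sig : ℝ) (hsig : sig = ∑ j ∈ I, w i j * (xu j - c j)) :
    ∀ x : Fin m → ℝ, (∀ j, xl j ≤ x j ∧ x j ≤ xu j) →
      0 ≤ max ((∑ j, w i j * x j + b i) - mlow i + sig) (I.sup' hI fun j => x j - c j) := by
  intro x hx
  by_cases h : ∃ j ∈ I, c j ≤ x j
  · obtain ⟨j, hjI, hj⟩ := h
    refine le_max_of_le_right ?_
    exact le_trans (by linarith) (Finset.le_sup' (fun j => x j - c j) hjI)
  · push_neg at h
    refine le_max_of_le_left ?_
    have key : (∑ j, w i j * x j + b i) - mlow i + sig =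
        ∑ j : Fin m, ((w i j * x j - w i j * (if w i j < 0 then xu j else xl j)) +
          if j ∈ I then w i j * (xu j - c j) else 0) := by
      rw [hmlow, hsig, Finset.sum_add_distrib, Finset.sum_sub_distrib]
      rw [Finset.sum_ite_mem, Finset.univ_inter]
      ring
    rw [key]
    apply Finset.sum_nonneg
    intro j _
    have hxj := hx j
    by_cases hjI : j ∈ I
    · have hwj := hw j hjI
      have hcj := hc j hjI
      have hxc := h j hjI
      simp only [hjI, if_true]
      by_cases hneg : w i j < 0
      · simp only [hneg, if_true]
        nlinarith
      · have : w i j = 0 := le_antisymm hwj (not_lt.mp hneg)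
        simp [this]
    · simp only [hjI, if_false, add_zero]
      by_cases hneg : w i j < 0
      · simp only [hneg, if_true]
        nlinarith
      · simp only [hneg, if_false]
        nlinarith [not_lt.mp hneg]
end

section
/- Fix i ∈ {1,…,n}, a nonempty set I ⊆ {1,…,m} with 0 ≤ w_{i,j} ≤ 1 for all j ∈ I and Σ_{j∈I} w_{i,j} ≤ 1, and reals c_j ∈ [x̲_j, x̄_j] for j ∈ I, and set σ = Σ_{j∈I} w_{i,j}(x̄_j − c_j). Then for every x ∈ K: f(x)_i − M_i + σ ≤ max(0, max_{j∈I}(x_j − c_j)). -/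
theorem small_pos_weights_subdivision_constraint (m n : ℕ) (hm : 1 ≤ m) (hn : 1 ≤ n)
    (w : Fin n → Fin m → ℝ) (b : Fin n → ℝ)
    (xl xu : Fin m → ℝ) (hbounds : ∀ j, xl j ≤ xu j)
    (Mup : Fin n → ℝ)
    (hMup : ∀ i, Mup i = b i + ∑ j, w i j * (if w i j < 0 then xl j else xu j))
    (i : Fin n) (I : Finset (Fin m)) (hI : I.Nonempty)
    (hw : ∀ j ∈ I, 0 ≤ w i j ∧ w i j ≤ 1) (hwsum : (∑ j ∈ I, w i j) ≤ 1)
    (c : Fin m → ℝ) (hc : ∀ j ∈ I, xl j ≤ c j ∧ c j ≤ xu j)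
    (sig : ℝ) (hsig : sig = ∑ j ∈ I, w i j * (xu j - c j)) :
    ∀ x : Fin m → ℝ, (∀ j, xl j ≤ x j ∧ x j ≤ xu j) →
      (∑ j, w i j * x j + b i) - Mup i + sig ≤ max 0 (I.sup' hI fun j => x j - c j) := by
  intro x hx
  set M0 := max 0 (I.sup' hI fun j => x j - c j) with hM0def
  have hM0 : 0 ≤ M0 := le_max_left _ _
  rw [hMup, hsig]
  set g : Fin m → ℝ := fun j => w i j * (x j - (if w i j < 0 then xl j else xu j)) with hg
  have h1 : (∑ j, w i j * x j + b i) - (b i + ∑ j, w i j * (if w i j < 0 then xl j else xu j))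
      = ∑ j, g j := by
    simp only [hg, mul_sub, Finset.sum_sub_distrib]
    ring
  have hsplit : ∑ j, g j = (∑ j ∈ Finset.univ \ I, g j) + ∑ j ∈ I, g j :=
    (Finset.sum_sdiff (Finset.subset_univ I)).symm
  have h2 : ∑ j ∈ Finset.univ \ I, g j ≤ 0 := by
    apply Finset.sum_nonpos
    intro j _
    by_cases h : w i j < 0
    · simp only [hg, if_pos h]
      nlinarith [(hx j).1]
    · simp only [hg, if_neg h]
      push_neg at h
      nlinarith [(hx j).2]
  have h3 : (∑ j ∈ I, g j) + ∑ j ∈ I, w i j * (xu j - c j) = ∑ j ∈ I, w i j * (x j - c j) := by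
    rw [← Finset.sum_add_distrib]
    apply Finset.sum_congr rfl
    intro j hj
    have hnn : ¬ w i j < 0 := not_lt.2 (hw j hj).1
    simp only [hg, if_neg hnn]
    ring
  have h4 : ∑ j ∈ I, w i j * (x j - c j) ≤ ∑ j ∈ I, w i j * M0 := by
    apply Finset.sum_le_sum
    intro j hj
    exact mul_le_mul_of_nonneg_left
      (le_trans (Finset.le_sup' (fun j => x j - c j) hj) (le_max_right _ _)) (hw j hj).1
  have h5 : ∑ j ∈ I, w i j * M0 ≤ M0 := by
    rw [← Finset.sum_mul]
    nlinarith [Finset.sum_nonneg (fun j hj => (hw j hj).1)]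
  linarith
end

section
/- Let J ⊆ {1,…,n} be nonempty, for each input j ∈ {1,…,m} set s_j = Σ_{i∈J} w_{i,j}, and set m_J = Σ_{i∈J} b_i + Σ_{j : s_j<0} s_j x̄_j + Σ_{j : s_j>0} s_j x̲_j. Let (u_i)_{i∈J} be reals with u_i ∈ [m_i, M_i] for all i ∈ J and Σ_{i∈J} u_i = m_J. Then for every x ∈ K: 0 ≤ max_{i∈J}(f(x)_i − u_i). -/
theorem output_sum_constraint (m n : ℕ) (hm : 1 ≤ m) (hn : 1 ≤ n)
    (w : Fin n → Fin m → ℝ) (b : Fin n → ℝ)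
    (xl xu : Fin m → ℝ) (hbounds : ∀ j, xl j ≤ xu j)
    (mlow Mup : Fin n → ℝ)
    (hmlow : ∀ i, mlow i = b i + ∑ j, w i j * (if w i j < 0 then xu j else xl j))
    (hMup : ∀ i, Mup i = b i + ∑ j, w i j * (if w i j < 0 then xl j else xu j))
    (J : Finset (Fin n)) (hJ : J.Nonempty)
    (s : Fin m → ℝ) (hs : ∀ j, s j = ∑ i ∈ J, w i j)
    (mJ : ℝ) (hmJ : mJ = (∑ i ∈ J, b i) + ∑ j, s j * (if s j < 0 then xu j else xl j))
    (u : Fin n → ℝ) (hu : ∀ i ∈ J, mlow i ≤ u i ∧ u i ≤ Mup i)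
    (husum : (∑ i ∈ J, u i) = mJ) :
    ∀ x : Fin m → ℝ, (∀ j, xl j ≤ x j ∧ x j ≤ xu j) →
      0 ≤ J.sup' hJ fun i => (∑ j, w i j * x j + b i) - u i := by
  intro x hx
  have hsum : 0 ≤ ∑ i ∈ J, ((∑ j, w i j * x j + b i) - u i) := by
    have h1 : ∑ i ∈ J, ((∑ j, w i j * x j + b i) - u i)
        = ∑ j, s j * (x j - (if s j < 0 then xu j else xl j)) := by
      rw [Finset.sum_sub_distrib, husum, hmJ, Finset.sum_add_distrib, Finset.sum_comm]
      simp only [← Finset.sum_mul, ← hs, mul_sub]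
      rw [Finset.sum_sub_distrib]
      ring
    rw [h1]
    apply Finset.sum_nonneg
    intro j _
    by_cases h : s j < 0
    · simp only [h, if_true]
      have := (hx j).2
      nlinarith
    · simp only [h, if_false]
      have := (hx j).1
      push_neg at h
      nlinarith
  by_contra hneg
  push_neg at hneg
  have : ∀ i ∈ J, (∑ j, w i j * x j + b i) - u i < 0 := by
    intro i hi
    exact lt_of_le_of_lt (Finset.le_sup' (fun i => (∑ j, w i j * x j + b i) - u i) hi) hneg
  have h2 := Finset.sum_lt_sum_of_nonempty hJ this
  simp only [Finset.sum_const_zero] at h2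
  linarith
end

section
/- The componentwise ReLU map is exact on tropical convex hulls: for every v_1, …, v_p ∈ ℝ^d and every λ ∈ ℝ^p with λ_k ≤ 0 for all k and λ_k = 0 for some k, one has ReLU(max_{1≤k≤p}(λ_k + v_k)) = max_{1≤k≤p}(λ_k + ReLU(v_k)) (componentwise). Consequently, the image under ReLU of the tropical convex hull of v_1, …, v_p equals the tropical convex hull of ReLU(v_1), …, ReLU(v_p). -/
lemma relu_key (d p : ℕ) (v : Fin p → Fin d → ℝ) (lam : Fin p → ℝ)
    (h1 : ∀ k, lam k ≤ 0) (h2 : ∃ k, lam k = 0) (t : Fin d) (zt : ℝ)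
    (hg : IsGreatest (Set.range fun k => lam k + v k t) zt) :
    IsGreatest (Set.range fun k => lam k + max (v k t) 0) (max zt 0) := by
  obtain ⟨⟨k1, hk1'⟩, hub⟩ := hg
  have hk1 : lam k1 + v k1 t = zt := hk1'
  obtain ⟨k0, hk0⟩ := h2
  constructor
  · rcases le_or_gt 0 zt with h | h
    · refine ⟨k1, ?_⟩
      show lam k1 + max (v k1 t) 0 = max zt 0
      have hle : lam k1 ≤ 0 := h1 k1
      have hv : 0 ≤ v k1 t := by linarith
      rw [max_eq_left hv, hk1, max_eq_left h]
    · refine ⟨k0, ?_⟩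
      show lam k0 + max (v k0 t) 0 = max zt 0
      have hub0 : lam k0 + v k0 t ≤ zt := hub ⟨k0, rfl⟩
      have hv : v k0 t ≤ zt := by linarith
      rw [hk0, max_eq_right (by linarith : v k0 t ≤ 0), max_eq_right h.le]
      ring
  · rintro y ⟨k, rfl⟩
    have h3 : lam k + v k t ≤ zt := hub ⟨k, rfl⟩
    have h4 : lam k ≤ 0 := h1 k
    rcases le_or_gt (v k t) 0 with h | h
    · simp only [max_eq_right h]
      have : lam k + 0 ≤ 0 := by linarith
      exact le_trans this (le_max_right _ _)
    · simp only [max_eq_left h.le]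
      exact le_trans h3 (le_max_left _ _)

theorem relu_exact_on_tropicalHull (d p : ℕ) (v : Fin p → Fin d → ℝ) :
    (∀ lam : Fin p → ℝ, (∀ k, lam k ≤ 0) → (∃ k, lam k = 0) →
      ∀ (t : Fin d) (zt : ℝ),
        IsGreatest (Set.range fun k => lam k + v k t) zt →
        IsGreatest (Set.range fun k => lam k + max (v k t) 0) (max zt 0)) ∧
    (fun z : Fin d → ℝ => fun t => max (z t) 0) '' tconv v
      = tconv (fun k => fun t => max (v k t) 0) := by
  refine ⟨relu_key d p v, ?_⟩
  ext x
  constructor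
  · rintro ⟨z, ⟨lam, h1, h2, h3⟩, rfl⟩
    exact ⟨lam, h1, h2, fun t => relu_key d p v lam h1 h2 t (z t) (h3 t)⟩
  · rintro ⟨lam, h1, h2, h3⟩
    obtain ⟨k0, hk0⟩ := h2
    have hne : (Finset.univ : Finset (Fin p)).Nonempty := ⟨k0, Finset.mem_univ _⟩
    set z : Fin d → ℝ := fun t => Finset.univ.sup' hne (fun k => lam k + v k t) with hz
    have hzg : ∀ t, IsGreatest (Set.range fun k => lam k + v k t) (z t) := by
      intro t
      constructor
      · obtain ⟨b, _, hb⟩ := Finset.exists_mem_eq_sup' hne (fun k => lam k + v k t)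
        exact ⟨b, hb.symm⟩
      · rintro y ⟨k, rfl⟩
        exact Finset.le_sup' (fun k => lam k + v k t) (Finset.mem_univ k)
    refine ⟨z, ⟨lam, h1, ⟨k0, hk0⟩, hzg⟩, ?_⟩
    funext t
    exact (relu_key d p v lam h1 ⟨k0, hk0⟩ t (z t) (hzg t)).unique (h3 t)
end

section
/- For every i ∈ {1,…,n} and j ∈ {1,…,m}, the constant δ_{i,j} is the exact optimum of the corresponding relational bound over the box: δ_{i,j} = min_{x ∈ K} ((f(x)_i − m_i) − (x_j − x̄_j)) and δ_{i,j} = − max_{x ∈ K} ((f(x)_i − M_i) − (x_j − x̲_j)); in particular both the minimum and the maximum are attained at some point of K. -/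
private lemma one_dim_min (W L U t : ℝ) (h : L ≤ U) (h1 : L ≤ t) (h2 : t ≤ U) :
    (if W ≤ 0 then 0 else if W ≤ 1 then W * (U - L) else U - L) ≤
      W * (t - (if W < 0 then U else L)) - (t - U) := by
  split_ifs with h0 hlt h1' hlt' h1'' <;> nlinarith

private lemma one_dim_max (W L U t : ℝ) (h : L ≤ U) (h1 : L ≤ t) (h2 : t ≤ U) :
    W * (t - (if W < 0 then L else U)) - (t - L) ≤
      -(if W ≤ 0 then 0 else if W ≤ 1 then W * (U - L) else U - L) := by
  split_ifs with h0 hlt h1' hlt' h1'' <;> nlinarith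

theorem delta_is_exact_optimum (m n : ℕ) (hm : 1 ≤ m) (hn : 1 ≤ n)
    (w : Fin n → Fin m → ℝ) (b : Fin n → ℝ)
    (xl xu : Fin m → ℝ) (hbounds : ∀ j, xl j ≤ xu j)
    (mlow Mup : Fin n → ℝ)
    (hmlow : ∀ i, mlow i = b i + ∑ j, w i j * (if w i j < 0 then xu j else xl j))
    (hMup : ∀ i, Mup i = b i + ∑ j, w i j * (if w i j < 0 then xl j else xu j))
    (delta : Fin n → Fin m → ℝ)
    (hdelta : ∀ i j, delta i j = if w i j ≤ 0 then 0
        else if w i j ≤ 1 then w i j * (xu j - xl j) else xu j - xl j) :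
    ∀ (i : Fin n) (j : Fin m),
      IsLeast
        {v : ℝ | ∃ x : Fin m → ℝ, (∀ j', xl j' ≤ x j' ∧ x j' ≤ xu j') ∧
            v = ((∑ j', w i j' * x j' + b i) - mlow i) - (x j - xu j)}
        (delta i j) ∧
      IsGreatest
        {v : ℝ | ∃ x : Fin m → ℝ, (∀ j', xl j' ≤ x j' ∧ x j' ≤ xu j') ∧
            v = ((∑ j', w i j' * x j' + b i) - Mup i) - (x j - xl j)}
        (-delta i j) := by
  intro i j
  -- rewrite objective as sum of per-coordinate terms
  set cmin : Fin m → ℝ := fun j' => if w i j' < 0 then xu j' else xl j' with hcmin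
  set cmax : Fin m → ℝ := fun j' => if w i j' < 0 then xl j' else xu j' with hcmax
  have key_min : ∀ x : Fin m → ℝ,
      ((∑ j', w i j' * x j' + b i) - mlow i) = ∑ j', w i j' * (x j' - cmin j') := by
    intro x
    rw [hmlow]
    have : ∑ j', w i j' * (x j' - cmin j') =
        ∑ j', w i j' * x j' - ∑ j', w i j' * cmin j' := by
      rw [← Finset.sum_sub_distrib]; congr 1; ext j'; ring
    rw [this]; ring
  have key_max : ∀ x : Fin m → ℝ,
      ((∑ j', w i j' * x j' + b i) - Mup i) = ∑ j', w i j' * (x j' - cmax j') := by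
    intro x
    rw [hMup]
    have : ∑ j', w i j' * (x j' - cmax j') =
        ∑ j', w i j' * x j' - ∑ j', w i j' * cmax j' := by
      rw [← Finset.sum_sub_distrib]; congr 1; ext j'; ring
    rw [this]; ring
  constructor
  · constructor
    · -- membership: attaining point
      refine ⟨fun j' => if j' = j then (if w i j ≤ 1 then xu j else xl j) else cmin j', ?_, ?_⟩
      · intro j'
        by_cases hj : j' = j
        · subst hj; simp only [if_pos rfl]
          split_ifs <;> exact ⟨by simp [hbounds j'], by simp [hbounds j']⟩
        · simp only [if_neg hj, hcmin]
          split_ifs <;> exact ⟨by simp [hbounds j'], by simp [hbounds j']⟩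
      · rw [key_min]
        rw [Finset.sum_eq_single j]
        · simp only [if_pos rfl, hdelta, hcmin]
          split_ifs <;> nlinarith [hbounds j]
        · intro j' _ hj'
          simp [hj']
        · simp
    · -- lower bound
      rintro v ⟨x, hx, rfl⟩
      rw [key_min, Finset.sum_eq_add_sum_sdiff_singleton_of_mem (Finset.mem_univ j)]
      have h1 : delta i j ≤ w i j * (x j - cmin j) - (x j - xu j) := by
        rw [hdelta, hcmin]
        exact one_dim_min (w i j) (xl j) (xu j) (x j) (hbounds j) (hx j).1 (hx j).2
      have h2 : (0:ℝ) ≤ ∑ j' ∈ Finset.univ \ {j}, w i j' * (x j' - cmin j') := by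
        apply Finset.sum_nonneg
        intro j' _
        simp only [hcmin]
        split_ifs with hw
        · nlinarith [(hx j').2]
        · nlinarith [(hx j').1, not_lt.mp hw]
      linarith
  · constructor
    · refine ⟨fun j' => if j' = j then (if w i j ≤ 1 then xl j else xu j) else cmax j', ?_, ?_⟩
      · intro j'
        by_cases hj : j' = j
        · subst hj; simp only [if_pos rfl]
          split_ifs <;> exact ⟨by simp [hbounds j'], by simp [hbounds j']⟩
        · simp only [if_neg hj, hcmax]
          split_ifs <;> exact ⟨by simp [hbounds j'], by simp [hbounds j']⟩
      · rw [key_max]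
        rw [Finset.sum_eq_single j]
        · simp only [if_pos rfl, hdelta, hcmax]
          split_ifs <;> nlinarith [hbounds j]
        · intro j' _ hj'
          simp [hj']
        · simp
    · rintro v ⟨x, hx, rfl⟩
      rw [key_max, Finset.sum_eq_add_sum_sdiff_singleton_of_mem (Finset.mem_univ j)]
      have h1 : w i j * (x j - cmax j) - (x j - xl j) ≤ -delta i j := by
        rw [hdelta, hcmax]
        exact one_dim_max (w i j) (xl j) (xu j) (x j) (hbounds j) (hx j).1 (hx j).2
      have h2 : ∑ j' ∈ Finset.univ \ {j}, w i j' * (x j' - cmax j') ≤ 0 := by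
        apply Finset.sum_nonpos
        intro j' _
        simp only [hcmax]
        split_ifs with hw
        · nlinarith [(hx j').1]
        · nlinarith [(hx j').2, not_lt.mp hw]
      linarith
end
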